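/- arXiv:1102.3359 — 11 statements merged into one kernel-verified Lean document; each statement's English description precedes it below -/
import Mathlib

section
/- A permutation π is connected (i.e., it is not the direct sum of two nonempty permutations) if and only if the labelled Motzkin path associated to the involution π is irreducible (touches the x-axis only at the origin and the final point), where this applies to involutions π with their standard associated Motzkin path. -/
open Equiv Finset

def Avoids4321 {n : ℕ} (π : Equiv.Perm (Fin n)) : Prop :=
  ¬ ∃ a b c d : Fin n, a < b ∧ b < c ∧ c < d ∧ π d < π c ∧ π c < π b ∧ π b < π a

def Avoids321 {n : ℕ} (π : Equiv.Perm (Fin n)) : Prop :=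
  ¬ ∃ a b c : Fin n, a < b ∧ b < c ∧ π c < π b ∧ π b < π a

def Avoids132 {n : ℕ} (π : Equiv.Perm (Fin n)) : Prop :=
  ¬ ∃ a b c : Fin n, a < b ∧ b < c ∧ π a < π c ∧ π c < π b

def Avoids312 {n : ℕ} (π : Equiv.Perm (Fin n)) : Prop :=
  ¬ ∃ a b c : Fin n, a < b ∧ b < c ∧ π b < π c ∧ π c < π a

def Avoids3412 {n : ℕ} (π : Equiv.Perm (Fin n)) : Prop :=
  ¬ ∃ a b c d : Fin n, a < b ∧ b < c ∧ c < d ∧ π c < π d ∧ π d < π a ∧ π a < π b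

/-- The image of the index interval `[a,b]` under `π` is a contiguous set of values. -/
def IsIntervalImage {n : ℕ} (π : Equiv.Perm (Fin n)) (a b : Fin n) : Prop :=
  ∀ i j k : Fin n, a ≤ i → i ≤ b → a ≤ j → j ≤ b → π i ≤ k → k ≤ π j →
    ∃ m : Fin n, a ≤ m ∧ m ≤ b ∧ π m = k

/-- A permutation is simple if its only intervals are the singletons and the whole interval. -/
def IsSimplePerm {n : ℕ} (π : Equiv.Perm (Fin n)) : Prop :=
  ∀ a b : Fin n, a < b → IsIntervalImage π a b → a.val = 0 ∧ b.val = n - 1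

/-- A permutation is connected (sum-indecomposable). -/
def IsConnectedPerm {n : ℕ} (π : Equiv.Perm (Fin n)) : Prop :=
  ¬ ∃ k : ℕ, 0 < k ∧ k < n ∧ ∀ i : Fin n, i.val < k → (π i).val < k

/-- The step of the Motzkin path associated to an involution at position `i`:
horizontal (0) at a fixed point, up (1) at an excedance, down (-1) at a deficiency. -/
def invStep {n : ℕ} (π : Equiv.Perm (Fin n)) (i : Fin n) : ℤ :=
  if π i = i then 0 else if i < π i then 1 else -1

/-- The height of the associated Motzkin path after the first `k` steps. -/
def heightUpTo {n : ℕ} (π : Equiv.Perm (Fin n)) (k : ℕ) : ℤ :=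
  ∑ i ∈ Finset.univ.filter (fun i : Fin n => i.val < k), invStep π i

/-- A Motzkin path, as its list of steps. -/
def IsMotzkinPath (l : List ℤ) : Prop :=
  (∀ s ∈ l, s = 1 ∨ s = 0 ∨ s = -1) ∧ l.sum = 0 ∧ ∀ p : List ℤ, p <+: l → 0 ≤ p.sum

/-! In the Motzkin path of an involution, the up and down steps come in pairs `i < π i`, the two
ends of an arc. Hence the height after `k` steps is the number of arcs `i < k ≤ π i` spanning the
cut after the first `k` steps, and the path touches the axis there exactly when no arc spans the cut,
i.e. when `π` maps `[0, k)` to itself. -/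

section

variable {n : ℕ} (π : Equiv.Perm (Fin n))

lemma invStep_eq_sub (i : Fin n) :
    invStep π i = (if i < π i then 1 else 0) - (if π i < i then 1 else 0) := by
  unfold invStep
  rcases lt_trichotomy i (π i) with h | h | h
  · simp [h, h.ne', h.not_gt]
  · simp [← h]
  · simp [h, h.ne, h.not_gt]

lemma heightUpTo_eq_card_sub (k : ℕ) :
    heightUpTo π k = (#{i | i.val < k ∧ i < π i} : ℤ) - #{i | i.val < k ∧ π i < i} := by
  simp only [heightUpTo, invStep_eq_sub, sum_sub_distrib, ← sum_filter, filter_filter]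
  simp

lemma card_deficiencies_below_eq (hinv : Function.Involutive π) (k : ℕ) :
    #{i | i.val < k ∧ π i < i} = #{i | (π i).val < k ∧ i < π i} :=
  card_bij' (fun i _ => π i) (fun i _ => π i) (by simp [hinv _]) (by simp [hinv _])
    (by simp [hinv _]) (by simp [hinv _])

lemma card_excedances_below_eq (k : ℕ) :
    #{i | i.val < k ∧ i < π i} =
      #{i | (π i).val < k ∧ i < π i} + #{i | i.val < k ∧ k ≤ (π i).val} := by
  rw [← card_filter_add_card_filter_not (fun i => (π i).val < k), filter_filter,
    filter_filter]
  congr 2 <;> ext i <;> simp only [mem_filter, mem_univ, true_and, Fin.lt_def] <;> omega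

lemma heightUpTo_eq_card_lt_le (hinv : Function.Involutive π) (k : ℕ) :
    heightUpTo π k = #{i | i.val < k ∧ k ≤ (π i).val} := by
  rw [heightUpTo_eq_card_sub, card_deficiencies_below_eq π hinv, card_excedances_below_eq]
  push_cast
  ring

lemma isConnectedPerm_iff_forall_exists_lt_le :
    IsConnectedPerm π ↔ ∀ k : ℕ, 0 < k → k < n → ∃ i : Fin n, i.val < k ∧ k ≤ (π i).val := by
  simp [IsConnectedPerm]

end

/-- An involution is connected iff its associated Motzkin path is irreducible,
i.e. returns to height 0 only at the final point. -/
theorem stmt0 (n : ℕ) (π : Equiv.Perm (Fin n)) (hinv : Function.Involutive ⇑π) :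
    IsConnectedPerm π ↔ ∀ k : ℕ, 0 < k → k < n → 0 < heightUpTo π k := by
  simp only [isConnectedPerm_iff_forall_exists_lt_le, heightUpTo_eq_card_lt_le π hinv,
    Nat.cast_pos, card_pos, filter_nonempty_iff, mem_univ, true_and]
end

section
/- Let π be an involution avoiding 4321 that is an inflation of 21 (i.e., skew-decomposable). Then either π = 21[α₁, α₂] with α₁ and α₂ both increasing permutations, or π = 321[α₁, α₂, α₃] with α₁, α₂, α₃ all increasing permutations and α₁, α₃ of equal length. -/
open Equiv Finset

theorem Fin.eq_add_of_strictMono {b c : ℕ} {f : Fin b → ℕ} (hf : StrictMono f)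
    (hlo : ∀ i, c ≤ f i) (hhi : ∀ i, f i < c + b) (i : Fin b) : f i = c + i := by
  have hg : StrictMono fun k => (⟨f k - c, by have := hlo k; have := hhi k; omega⟩ : Fin b) :=
    fun k l hkl => by
      have := hf hkl; have := hlo k
      rw [Fin.mk_lt_mk]; omega
  have hi := Fin.ext_iff.mp (hg.apply_eq (x := i))
  dsimp only at hi
  have := hlo i
  omega

variable {n : ℕ} {π : Perm (Fin n)}

/-- `π = 21[α, β]` with `α` of length `a`. -/
def IsSkewPrefix (π : Perm (Fin n)) (a : ℕ) : Prop :=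
  ∀ i : Fin n, i.val < a → n - a ≤ (π i).val

theorem IsSkewPrefix.sub_of_involutive {a : ℕ} (h : IsSkewPrefix π a)
    (hinv : Function.Involutive π) (han : a ≤ n) : IsSkewPrefix π (n - a) := by
  intro i hi
  by_contra! hπi
  have := hinv i ▸ h (π i) (by omega)
  omega

theorem Avoids4321.not_nested_arcs (hav : Avoids4321 π) (hinv : Function.Involutive π)
    {i j : Fin n} (hij : i < j) (hj : j < π j) (hji : π j < π i) : False :=
  hav ⟨i, j, π j, π i, hij, hj, hji, by rwa [hinv, hinv], by rwa [hinv], hji⟩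

namespace IsSkewPrefix

variable (hinv : Function.Involutive π) (hav : Avoids4321 π) {b : ℕ} (hbn : b ≤ n - b)
  (h : IsSkewPrefix π b)
include hinv hav hbn h

theorem strictMonoOn_prefix {i j : Fin n} (hij : i < j) (hj : j.val < b) : π i < π j := by
  by_contra! hji
  have hne : π j ≠ π i := fun e => hij.ne' (π.injective e)
  have := h j hj
  exact hav.not_nested_arcs hinv hij (by rw [Fin.lt_def]; omega) (lt_of_le_of_ne hji hne)

theorem val_apply_of_lt {i : Fin n} (hi : i.val < b) : (π i).val = n - b + i.val := by
  have hb : b ≤ n := by omega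
  exact Fin.eq_add_of_strictMono (f := fun k : Fin b => (π (Fin.castLE hb k)).val)
    (fun k l hkl => strictMonoOn_prefix hinv hav hbn h hkl l.isLt)
    (fun k => h _ k.isLt) (fun k => by omega) ⟨i, hi⟩

theorem val_apply_of_le {i : Fin n} (hi : n - b ≤ i.val) : (π i).val = i.val - (n - b) := by
  have hj : π ⟨i.val - (n - b), by omega⟩ = i :=
    Fin.ext (by rw [val_apply_of_lt hinv hav hbn h (by dsimp only; omega)]; dsimp only; omega)
  have := hinv ⟨i.val - (n - b), by omega⟩
  rw [hj] at this
  rw [this]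

theorem apply_le_self (hb : 0 < b) {i : Fin n} (hi : b ≤ i.val) : π i ≤ i := by
  by_contra! hlt
  have hπi : (π i).val < n - b := by
    by_contra! hle
    have := val_apply_of_le hinv hav hbn h hle
    rw [hinv] at this
    omega
  have h0 := val_apply_of_lt hinv hav hbn h (i := ⟨0, by omega⟩) hb
  exact hav.not_nested_arcs hinv (i := ⟨0, by omega⟩) (j := i)
    (by rw [Fin.lt_def]; dsimp only; omega) hlt (by rw [Fin.lt_def, h0]; omega)

theorem apply_eq_self (hb : 0 < b) {i : Fin n} (hbi : b ≤ i.val) (hi : i.val < n - b) :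
    π i = i := by
  refine le_antisymm (apply_le_self hinv hav hbn h hb hbi) ?_
  have hπi : b ≤ (π i).val := by
    by_contra! hlt
    have := val_apply_of_lt hinv hav hbn h hlt
    rw [hinv] at this
    omega
  have := apply_le_self hinv hav hbn h hb hπi
  rwa [hinv] at this

theorem val_apply_eq_ite (hb : 0 < b) (i : Fin n) :
    (π i).val = if i.val < b then n - b + i.val
      else if i.val < n - b then i.val else i.val - (n - b) := by
  split_ifs with h1 h2
  · exact val_apply_of_lt hinv hav hbn h h1
  · rw [apply_eq_self hinv hav hbn h hb (not_lt.1 h1) h2]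
  · exact val_apply_of_le hinv hav hbn h (not_lt.1 h2)

end IsSkewPrefix

/-- A skew-decomposable 4321-avoiding involution is either `21[1..a, 1..a]` or
`321[1..a, 1..m, 1..a]` with increasing blocks. -/
theorem stmt3 (n : ℕ) (π : Equiv.Perm (Fin n)) (hinv : Function.Involutive ⇑π)
    (hav : Avoids4321 π)
    (hskew : ∃ a : ℕ, 0 < a ∧ a < n ∧ ∀ i : Fin n, i.val < a → n - a ≤ (π i).val) :
    (∃ a : ℕ, 0 < a ∧ n = 2 * a ∧ ∀ i : Fin n,
        (π i).val = if i.val < a then i.val + a else i.val - a) ∨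
    (∃ a m : ℕ, 0 < a ∧ 0 < m ∧ n = 2 * a + m ∧ ∀ i : Fin n,
        (π i).val = if i.val < a then i.val + a + m
          else if i.val < a + m then i.val else i.val - (a + m)) := by
  obtain ⟨a, ha0, han, ha⟩ := hskew
  obtain ⟨b, hb0, hbn, hb⟩ : ∃ b, 0 < b ∧ b ≤ n - b ∧ IsSkewPrefix π b := by
    rcases le_total a (n - a) with h | h
    · exact ⟨a, ha0, h, ha⟩
    · exact ⟨n - a, by omega, by omega, IsSkewPrefix.sub_of_involutive ha hinv han.le⟩
  have hπ := IsSkewPrefix.val_apply_eq_ite hinv hav hbn hb hb0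
  rcases hbn.eq_or_lt with hn | hn
  · left
    refine ⟨b, hb0, by omega, fun i => ?_⟩
    rw [hπ i]
    split_ifs <;> omega
  · right
    refine ⟨b, n - 2 * b, hb0, by omega, by omega, fun i => ?_⟩
    rw [hπ i]
    split_ifs <;> omega
end

section
/- The reverse-complement operation is a bijection on the set of 4321-avoiding involutions of length n, and it maps simple involutions to simple involutions; moreover, on associated Motzkin paths (with unitary labelling), reverse-complement corresponds to reflecting the Motzkin path about the vertical line x = n/2. -/
/-!
Reverse-complement is conjugation by the order-reversing involution `i ↦ i.rev`. Conjugation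
preserves being an involution and is undone by conjugating again; since `rev` reverses the order
of both positions and values, an occurrence of the self-reverse-complementary pattern 4321 in `ρ`
is one in `π` read backwards, an interval `[a, b]` of `ρ` is the interval `[b.rev, a.rev]` of `π`,
and excedances at `i` become deficiencies at `i.rev`.
-/

open Equiv Finset

section RevComp

variable {n : ℕ} {π ρ : Perm (Fin n)}

theorem revComp_rev_rev (hρ : ∀ i, ρ i = (π i.rev).rev) (i : Fin n) : (ρ i.rev).rev = π i := by
  rw [hρ, Fin.rev_rev, Fin.rev_rev]

theorem revComp_involutive (hρ : ∀ i, ρ i = (π i.rev).rev) (hπ : Function.Involutive π) :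
    Function.Involutive ρ := by
  intro i
  rw [hρ, hρ, Fin.rev_rev, hπ, Fin.rev_rev]

theorem revComp_avoids4321 (hρ : ∀ i, ρ i = (π i.rev).rev) (hπ : Avoids4321 π) :
    Avoids4321 ρ := by
  rintro ⟨a, b, c, d, hab, hbc, hcd, hdc, hcb, hba⟩
  simp only [hρ, Fin.rev_lt_rev] at hdc hcb hba
  exact hπ ⟨d.rev, c.rev, b.rev, a.rev, Fin.rev_lt_rev.mpr hcd, Fin.rev_lt_rev.mpr hbc,
    Fin.rev_lt_rev.mpr hab, hba, hcb, hdc⟩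

theorem IsIntervalImage.of_revComp (hρ : ∀ i, ρ i = (π i.rev).rev) {a b : Fin n}
    (h : IsIntervalImage ρ a b) : IsIntervalImage π b.rev a.rev := by
  intro i j k hbi hia hbj hja hik hkj
  obtain ⟨m, ham, hmb, hm⟩ := h j.rev i.rev k.rev (Fin.le_rev_iff.mp hja)
    (Fin.rev_le_iff.mp hbj) (Fin.le_rev_iff.mp hia) (Fin.rev_le_iff.mp hbi)
    (by rwa [hρ, Fin.rev_rev, Fin.rev_le_rev]) (by rwa [hρ, Fin.rev_rev, Fin.rev_le_rev])
  refine ⟨m.rev, Fin.rev_le_rev.mpr hmb, Fin.rev_le_rev.mpr ham, ?_⟩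
  rwa [hρ, Fin.rev_eq_iff, Fin.rev_rev] at hm

theorem revComp_isSimplePerm (hρ : ∀ i, ρ i = (π i.rev).rev) (hπ : IsSimplePerm π) :
    IsSimplePerm ρ := by
  intro a b hab h
  obtain ⟨hb, ha⟩ := hπ b.rev a.rev (Fin.rev_lt_rev.mpr hab) (h.of_revComp hρ)
  simp only [Fin.val_rev] at hb ha
  omega

theorem invStep_revComp (hρ : ∀ i, ρ i = (π i.rev).rev) (i : Fin n) :
    invStep ρ i = -invStep π i.rev := by
  have hfix : ρ i = i ↔ π i.rev = i.rev := by rw [hρ, Fin.rev_eq_iff]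
  have hexc : i < ρ i ↔ π i.rev < i.rev := by rw [hρ, Fin.lt_rev_iff]
  unfold invStep
  rcases lt_trichotomy (π i.rev) i.rev with h | h | h
  · rw [if_neg (mt hfix.mp h.ne), if_pos (hexc.mpr h), if_neg h.ne, if_neg h.not_gt]
    rfl
  · rw [if_pos (hfix.mpr h), if_pos h, neg_zero]
  · rw [if_neg (mt hfix.mp h.ne'), if_neg (mt hexc.mp h.not_gt), if_neg h.ne', if_pos h]

end RevComp

/-- The reverse-complement `ρ i = (π i.rev).rev` maps 4321-avoiding involutions to
4321-avoiding involutions, is self-inverse on this set (hence a bijection), maps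
simple involutions to simple involutions, and reflects the associated Motzkin path
about the vertical line `x = n/2` (swapping up and down steps). -/
theorem stmt7 (n : ℕ) (π : Equiv.Perm (Fin n)) (hinv : Function.Involutive ⇑π)
    (hav : Avoids4321 π) (ρ : Equiv.Perm (Fin n))
    (hρ : ∀ i : Fin n, ρ i = (π i.rev).rev) :
    Function.Involutive ⇑ρ ∧ Avoids4321 ρ ∧
    (∀ i : Fin n, (ρ i.rev).rev = π i) ∧
    (IsSimplePerm π → IsSimplePerm ρ) ∧
    (∀ i : Fin n, invStep ρ i = - invStep π i.rev) :=
  ⟨revComp_involutive hρ hinv, revComp_avoids4321 hρ hav, revComp_rev_rev hρ,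
    revComp_isSimplePerm hρ, invStep_revComp hρ⟩
end

section
/- The generating function of involutions avoiding 4321 that are inflations of 21 is β(x) = x²/((1−x²)(1−x)); equivalently, the number of skew-decomposable involutions of length n avoiding 4321 equals the number of pairs (k,m) with 2k+m = n, k ≥ 1, m ≥ 0, i.e., ⌊n/2⌋ for n ≥ 2 (counting solutions appropriately). -/
open Equiv Finset

/-- The number of skew-decomposable (inflation of 21) 4321-avoiding involutions of
length `n`. -/
noncomputable def skewCount (n : ℕ) : ℕ :=
  Nat.card {π : Equiv.Perm (Fin n) // Function.Involutive ⇑π ∧ Avoids4321 π ∧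
    ∃ a : ℕ, 0 < a ∧ a < n ∧ ∀ i : Fin n, i.val < a → n - a ≤ (π i).val}

/-! Let `a` be a witness of skew-decomposability, `A = [0, a)` and `B = [n - a, n)`; since
`n - a` is a witness as well, we may take `2 * a ≤ n`. The involution `π` maps `A` into `B`, so by
counting it exchanges `A` and `B`. A descent `i < j` in `A` together with `π j, π i` would be a
`4321`, so `π` is increasing on `A`, hence the shift by `n - a` there; a non-fixed point in the
middle block would form a `4321` with the first and last positions. So `π` is
`321[1^a, 1^(n-2a), 1^a]`, and these permutations, `1 ≤ a ≤ n / 2`, do avoid `4321`: each of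
their inversions goes from a lower to a higher of their three blocks. -/

theorem val_add_sub_le_of_strictMonoOn {n m : ℕ} {f : Fin n → Fin m} {s : Set (Fin n)}
    [hs : s.OrdConnected] (hf : StrictMonoOn f s) {i j : Fin n} (hi : i ∈ s) (hj : j ∈ s)
    (hij : i ≤ j) : (f i : ℕ) + (j - i) ≤ f j := by
  obtain ⟨d, hd⟩ : ∃ d, (j : ℕ) = i + d := ⟨j - i, by rw [Fin.le_def] at hij; omega⟩
  induction d generalizing j with
  | zero =>
    obtain rfl : j = i := Fin.ext (by omega)
    simp
  | succ d ih =>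
    let j' : Fin n := ⟨i + d, by omega⟩
    have hj' : j' ∈ s :=
      hs.out hi hj ⟨Fin.le_def.2 (by simp [j']), Fin.le_def.2 (by simp [j']; omega)⟩
    have hlt : f j' < f j := hf hj' hj (Fin.lt_def.2 (by simp [j']; omega))
    have := ih hj' (Fin.le_def.2 (by simp [j'])) rfl
    rw [Fin.lt_def] at hlt
    simp only [j'] at this hlt
    omega

theorem Function.Involutive.mapsTo_of_card_le {α : Type*} {f : α → α} (hf : Involutive f)
    {s t : Finset α} (hst : Set.MapsTo f s t) (hcard : #t ≤ #s) : Set.MapsTo f t s := by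
  intro y hy
  obtain ⟨x, hx, rfl⟩ := Finset.surjOn_of_injOn_of_card_le f hst hf.injective.injOn hcard hy
  rwa [Finset.mem_coe, hf x]

theorem Fin.card_filter_le_val (n m : ℕ) : #{i : Fin n | m ≤ (i : ℕ)} = n - m := by
  have := Finset.card_filter_add_card_filter_not (s := Finset.univ) fun i : Fin n => (i : ℕ) < m
  simp only [not_lt, Fin.card_filter_val_lt, Finset.card_univ, Fintype.card_fin] at this
  omega

def skewFun (n k : ℕ) (i : Fin n) : Fin n :=
  if h : (i : ℕ) < k then ⟨i + (n - k), by have := i.isLt; omega⟩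
  else if n - k ≤ (i : ℕ) then ⟨i - (n - k), (Nat.sub_le _ _).trans_lt i.isLt⟩ else i

theorem val_skewFun (n k : ℕ) (i : Fin n) : (skewFun n k i : ℕ) =
    if (i : ℕ) < k then i + (n - k) else if n - k ≤ (i : ℕ) then i - (n - k) else i := by
  unfold skewFun
  split_ifs <;> rfl

theorem skewFun_involutive {n k : ℕ} (hk : 2 * k ≤ n) : Function.Involutive (skewFun n k) := by
  intro i
  ext
  simp only [val_skewFun]
  split_ifs <;> omega

def skewInvolution (n k : ℕ) (hk : 2 * k ≤ n) : Perm (Fin n) := (skewFun_involutive hk).toPerm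

def skewBlock (n k : ℕ) (i : Fin n) : ℕ :=
  if (i : ℕ) < k then 0 else if (i : ℕ) < n - k then 1 else 2

theorem skewBlock_lt_of_inversion {n k : ℕ} {i j : Fin n} (hij : i < j)
    (hinv : skewFun n k j < skewFun n k i) : skewBlock n k i < skewBlock n k j := by
  rw [Fin.lt_def, val_skewFun, val_skewFun] at hinv
  rw [Fin.lt_def] at hij
  unfold skewBlock
  split_ifs at hinv ⊢ <;> omega

theorem avoids4321_skewInvolution {n k : ℕ} (hk : 2 * k ≤ n) :
    Avoids4321 (skewInvolution n k hk) := by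
  rintro ⟨a, b, c, d, hab, hbc, hcd, hdc, hcb, hba⟩
  have hd : skewBlock n k d ≤ 2 := by unfold skewBlock; split_ifs <;> omega
  have := skewBlock_lt_of_inversion hab hba
  have := skewBlock_lt_of_inversion hbc hcb
  have := skewBlock_lt_of_inversion hcd hdc
  omega

def IsSkewInvolutionAvoiding4321 {n : ℕ} (π : Perm (Fin n)) : Prop :=
  Function.Involutive ⇑π ∧ Avoids4321 π ∧
    ∃ a : ℕ, 0 < a ∧ a < n ∧ ∀ i : Fin n, i.val < a → n - a ≤ (π i).val

theorem skewCount_eq_card (n : ℕ) :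
    skewCount n = Nat.card {π : Perm (Fin n) // IsSkewInvolutionAvoiding4321 π} := rfl

theorem isSkewInvolutionAvoiding4321_skewInvolution {n k : ℕ} (hk0 : 0 < k) (hk : 2 * k ≤ n) :
    IsSkewInvolutionAvoiding4321 (skewInvolution n k hk) :=
  ⟨skewFun_involutive hk, avoids4321_skewInvolution hk, k, hk0, by omega, fun i hi => by
    simp only [skewInvolution, Function.Involutive.coe_toPerm, val_skewFun, if_pos hi]
    omega⟩

section Classification

variable {n a : ℕ} {π : Perm (Fin n)}

theorem exists_witness_le_half (hπ : Function.Involutive π) (ha0 : 0 < a) (han : a < n)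
    (hw : ∀ i : Fin n, (i : ℕ) < a → n - a ≤ π i) :
    ∃ b, 0 < b ∧ 2 * b ≤ n ∧ ∀ i : Fin n, (i : ℕ) < b → n - b ≤ π i := by
  rcases le_or_gt (2 * a) n with h | h
  · exact ⟨a, ha0, h, hw⟩
  · refine ⟨n - a, by omega, by omega, fun i hi => ?_⟩
    by_contra! hlt
    have := hw (π i) (by omega)
    rw [hπ i] at this
    omega

theorem lt_of_le_apply (hπ : Function.Involutive π)
    (hw : ∀ i : Fin n, (i : ℕ) < a → n - a ≤ π i) {j : Fin n} (hj : n - a ≤ (j : ℕ)) :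
    (π j : ℕ) < a := by
  have hmaps : Set.MapsTo π (univ.filter fun i : Fin n => (i : ℕ) < a)
      (univ.filter fun i : Fin n => n - a ≤ (i : ℕ)) := fun i hi => by
    simpa using hw i (by simpa using hi)
  have hcard : #{i : Fin n | n - a ≤ (i : ℕ)} ≤ #{i : Fin n | (i : ℕ) < a} := by
    rw [Fin.card_filter_le_val, Fin.card_filter_val_lt]
    omega
  simpa using hπ.mapsTo_of_card_le hmaps hcard (by simpa using hj)

theorem strictMonoOn_of_avoids4321 (hπ : Function.Involutive π) (hav : Avoids4321 π)
    (h2a : 2 * a ≤ n) (hw : ∀ i : Fin n, (i : ℕ) < a → n - a ≤ π i) :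
    StrictMonoOn π {i : Fin n | (i : ℕ) < a} := by
  intro i _ j (hj : (j : ℕ) < a) hij
  by_contra! hle
  have hji : π j < π i := lt_of_le_of_ne hle (π.injective.ne hij.ne')
  have hjπ : j < π j := Fin.lt_def.2 (by have := hw j hj; omega)
  exact hav ⟨i, j, π j, π i, hij, hjπ, hji, by rwa [hπ i, hπ j], by rwa [hπ j], hji⟩

theorem val_apply_of_lt (hπ : Function.Involutive π) (hav : Avoids4321 π) (h2a : 2 * a ≤ n)
    (hw : ∀ i : Fin n, (i : ℕ) < a → n - a ≤ π i) {i : Fin n} (hi : (i : ℕ) < a) :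
    (π i : ℕ) = i + (n - a) := by
  have : Set.OrdConnected {i : Fin n | (i : ℕ) < a} :=
    ⟨fun _ _ _ hy _ hz => lt_of_le_of_lt (Fin.le_def.1 hz.2) hy⟩
  have hmono := strictMonoOn_of_avoids4321 hπ hav h2a hw
  let first : Fin n := ⟨0, by omega⟩
  let last : Fin n := ⟨a - 1, by omega⟩
  have hfirst : (first : ℕ) < a := by simp only [first]; omega
  have hlast : (last : ℕ) < a := by simp only [last]; omega
  have hlower := val_add_sub_le_of_strictMonoOn hmono hfirst hi (Fin.le_def.2 (Nat.zero_le _))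
  have hupper := val_add_sub_le_of_strictMonoOn hmono hi hlast
    (Fin.le_def.2 (by simp only [last]; omega))
  have := hw first hfirst
  have := (π last).isLt
  simp only [first, last] at *
  omega

theorem apply_eq_self_of_le_of_lt (hπ : Function.Involutive π) (hav : Avoids4321 π)
    (ha0 : 0 < a) (hw : ∀ i : Fin n, (i : ℕ) < a → n - a ≤ π i) {i : Fin n}
    (hai : a ≤ (i : ℕ)) (hia : (i : ℕ) < n - a) : π i = i := by
  have hmid : a ≤ (π i : ℕ) ∧ (π i : ℕ) < n - a := by
    constructor
    · by_contra! h
      have := hw (π i) h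
      rw [hπ i] at this
      omega
    · by_contra! h
      have := lt_of_le_apply hπ hw h
      rw [hπ i] at this
      omega
  by_contra hne
  obtain ⟨p, q, hpq, hπp, hπq, hp, hq⟩ : ∃ p q : Fin n,
      p < q ∧ π p = q ∧ π q = p ∧ a ≤ (p : ℕ) ∧ (q : ℕ) < n - a := by
    rcases lt_or_gt_of_ne hne with h | h
    · exact ⟨π i, i, h, hπ i, rfl, hmid.1, hia⟩
    · exact ⟨i, π i, h, rfl, hπ i, hai, hmid.2⟩
  let first : Fin n := ⟨0, by omega⟩
  let last : Fin n := ⟨n - 1, by omega⟩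
  have hfirst := hw first (by simp only [first]; omega)
  have hlast := lt_of_le_apply hπ hw (j := last) (by simp only [last]; omega)
  rw [Fin.lt_def] at hpq
  refine hav ⟨first, p, q, last, ?_, hpq, ?_, ?_, ?_, ?_⟩ <;> rw [Fin.lt_def] <;>
    simp only [first, last, hπp, hπq] at * <;> omega

theorem eq_skewInvolution (hπ : Function.Involutive π) (hav : Avoids4321 π) (ha0 : 0 < a)
    (h2a : 2 * a ≤ n) (hw : ∀ i : Fin n, (i : ℕ) < a → n - a ≤ π i) :
    π = skewInvolution n a h2a := by
  refine Equiv.ext fun i => Fin.ext ?_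
  rw [skewInvolution, Function.Involutive.coe_toPerm, val_skewFun]
  split_ifs with h1 h2
  · exact val_apply_of_lt hπ hav h2a hw h1
  · have := val_apply_of_lt hπ hav h2a hw (lt_of_le_apply hπ hw h2)
    rw [hπ i] at this
    omega
  · rw [apply_eq_self_of_le_of_lt hπ hav ha0 hw (by omega) (by omega)]

end Classification

theorem skewInvolution_inj {n k l : ℕ} (hk0 : 0 < k) (hl0 : 0 < l) (hk : 2 * k ≤ n)
    (hl : 2 * l ≤ n) (h : skewInvolution n k hk = skewInvolution n l hl) : k = l := by
  have := congrArg (fun π => ((π ⟨0, by omega⟩ : Fin n) : ℕ)) h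
  simp only [skewInvolution, Function.Involutive.coe_toPerm, val_skewFun, if_pos hk0,
    if_pos hl0] at this
  omega

theorem IsSkewInvolutionAvoiding4321.exists_eq_skewInvolution {n : ℕ} {π : Perm (Fin n)}
    (h : IsSkewInvolutionAvoiding4321 π) :
    ∃ k, ∃ hk : 2 * k ≤ n, 0 < k ∧ π = skewInvolution n k hk := by
  obtain ⟨hπ, hav, a, ha0, han, hw⟩ := h
  obtain ⟨b, hb0, h2b, hwb⟩ := exists_witness_le_half hπ ha0 han hw
  exact ⟨b, h2b, hb0, eq_skewInvolution hπ hav hb0 h2b hwb⟩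

theorem skewCount_eq (n : ℕ) : skewCount n = n / 2 := by
  have hk : ∀ k : Set.Icc 1 (n / 2), 0 < (k : ℕ) ∧ 2 * (k : ℕ) ≤ n := fun k => by
    have := k.2; simp only [Set.mem_Icc] at this; omega
  let f : Set.Icc 1 (n / 2) → {π : Perm (Fin n) // IsSkewInvolutionAvoiding4321 π} := fun k =>
    ⟨skewInvolution n k (hk k).2, isSkewInvolutionAvoiding4321_skewInvolution (hk k).1 (hk k).2⟩
  have hf : Function.Bijective f := by
    refine ⟨fun k l hkl => Subtype.ext ?_, fun π => ?_⟩
    · exact skewInvolution_inj (hk k).1 (hk l).1 (hk k).2 (hk l).2 (congrArg Subtype.val hkl)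
    · obtain ⟨k, hk2, hk0, hπ⟩ := π.2.exists_eq_skewInvolution
      exact ⟨⟨k, by simp only [Set.mem_Icc]; omega⟩, Subtype.ext hπ.symm⟩
  rw [skewCount_eq_card, ← Nat.card_eq_of_bijective f hf]
  simp

open PowerSeries in
theorem one_sub_X_sq_mul_mk_div_two {R : Type*} [CommRing R] :
    (1 - X ^ 2 : R⟦X⟧) * PowerSeries.mk (fun n => ((n / 2 : ℕ) : R)) =
      X ^ 2 * PowerSeries.mk 1 := by
  ext n
  rw [sub_mul, one_mul, map_sub, coeff_X_pow_mul', coeff_X_pow_mul', coeff_mk, coeff_mk]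
  rcases n with _ | _ | m
  · simp
  · simp
  · simp [show (m + 1 + 1) / 2 = m / 2 + 1 by omega]

open PowerSeries in
theorem one_sub_X_sq_mul_one_sub_X_mul_mk_div_two {R : Type*} [CommRing R] :
    (1 - X ^ 2 : R⟦X⟧) * (1 - X) * PowerSeries.mk (fun n => ((n / 2 : ℕ) : R)) = X ^ 2 := by
  calc (1 - X ^ 2 : R⟦X⟧) * (1 - X) * PowerSeries.mk (fun n => ((n / 2 : ℕ) : R))
      = (1 - X) * ((1 - X ^ 2) * PowerSeries.mk (fun n => ((n / 2 : ℕ) : R))) := by ring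
    _ = X ^ 2 * (PowerSeries.mk 1 * (1 - X)) := by rw [one_sub_X_sq_mul_mk_div_two]; ring
    _ = X ^ 2 := by rw [mk_one_mul_one_sub_eq_one, mul_one]

/-- The generating function of skew-decomposable 4321-avoiding involutions is
`x^2 / ((1-x^2)(1-x))`; equivalently their number in length `n ≥ 2` is `⌊n/2⌋`. -/
theorem stmt8 :
    (∀ n : ℕ, 2 ≤ n → skewCount n = n / 2) ∧
    (1 - PowerSeries.X ^ 2) * (1 - PowerSeries.X) *
        (PowerSeries.mk fun n => (skewCount n : ℚ)) = PowerSeries.X ^ 2 := by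
  refine ⟨fun n _ => skewCount_eq n, ?_⟩
  simp only [skewCount_eq]
  exact one_sub_X_sq_mul_one_sub_X_mul_mk_div_two
end

section
/- The generating function in two variables of 4321-avoiding involutions, where x marks the length and y the number of fixed points, is f(x,y) = (1 − xy − √(1 − 2xy + x²y² − 4x²))/(2x²); equivalently, the number of 4321-avoiding involutions of length n with k fixed points equals the number of Motzkin paths of length n with k horizontal steps. -/
/-!
An involution is determined by its arcs `(i, π i)` with `i < π i`; it avoids 4321 exactly when
no two arcs nest. Reading arc openers, arc closers and fixed points as up, down and horizontal
steps gives a Motzkin path, since every prefix contains at least as many openers as closers.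
Conversely, by the ballot property of a Motzkin path its `j`-th up step precedes its `j`-th down
step, and matching them yields the unique non-nesting involution with that path. Splitting a
Motzkin path at its first step (horizontal, or an up step together with its first return to the
axis) gives `f = 1 + x y f + x² f²`.
-/

open Equiv Finset

/-- Number of 4321-avoiding involutions of length `n` with `k` fixed points. -/
noncomputable def invCount4321 (n k : ℕ) : ℕ :=
  Nat.card {π : Equiv.Perm (Fin n) // Function.Involutive ⇑π ∧ Avoids4321 π ∧
    (Finset.univ.filter fun i : Fin n => π i = i).card = k}

/-- Number of Motzkin paths of length `n` with `k` horizontal steps. -/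
noncomputable def motzkinHCount (n k : ℕ) : ℕ :=
  Nat.card {l : List ℤ // IsMotzkinPath l ∧ l.length = n ∧ l.count 0 = k}

open Function

lemma sum_eq_card_filter_sub_card_filter {ι : Type*} (s : Finset ι) (f : ι → ℤ)
    (hf : ∀ i ∈ s, f i = 1 ∨ f i = 0 ∨ f i = -1) :
    ∑ i ∈ s, f i = #{i ∈ s | f i = 1} - #{i ∈ s | f i = -1} := by
  classical
  rw [Finset.card_filter, Finset.card_filter, Nat.cast_sum, Nat.cast_sum, ← sum_sub_distrib]
  refine sum_congr rfl fun i hi => ?_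
  rcases hf i hi with h | h | h <;> simp [h]

lemma List.count_ofFn_eq_card {α : Type*} [DecidableEq α] {n : ℕ} (f : Fin n → α) (a : α) :
    (List.ofFn f).count a = #{i | f i = a} := by
  induction n with
  | zero => simp
  | succ m ih =>
    rw [List.ofFn_succ, List.count_cons, ih, Finset.card_filter, Finset.card_filter,
      Fin.sum_univ_succ, add_comm]
    simp

theorem StrictMonoOn.eqOn_of_image_eq {α β : Type*} [LinearOrder α] [Preorder β] {s : Set α}
    (hs : s.Finite) {f g : α → β} (hf : StrictMonoOn f s) (hg : StrictMonoOn g s)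
    (h : f '' s = g '' s) : s.EqOn f g := by
  have := hs.to_subtype
  have hfg := (Set.strictMonoOn_iff_strictMono.mp hf).range_inj
    (Set.strictMonoOn_iff_strictMono.mp hg)
  rw [← Set.image_eq_range, ← Set.image_eq_range] at hfg
  exact fun x hx => congrFun (hfg.mp h) ⟨x, hx⟩

theorem Finset.orderEmbOfFin_lt_orderEmbOfFin {α : Type*} [LinearOrder α] {U D : Finset α}
    (hUD : #D = #U) (hdisj : Disjoint U D) (hle : ∀ x, #{d ∈ D | d ≤ x} ≤ #{u ∈ U | u ≤ x})
    (j : Fin #U) : U.orderEmbOfFin rfl j < D.orderEmbOfFin hUD j := by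
  set eU := U.orderEmbOfFin rfl
  set eD := D.orderEmbOfFin hUD
  by_contra! hdu
  have hdu : eD j < eU j := hdu.lt_of_ne fun h =>
    disjoint_left.mp hdisj (U.orderEmbOfFin_mem rfl j) (h ▸ D.orderEmbOfFin_mem hUD j)
  have hD : j.val + 1 ≤ #{d ∈ D | d ≤ eD j} := by
    rw [← Fin.card_Iic j]
    refine card_le_card_of_injOn eD (fun i hi => ?_) eD.injective.injOn
    simp only [coe_filter, Set.mem_ofPred_eq, mem_coe, mem_Iic] at hi ⊢
    exact ⟨D.orderEmbOfFin_mem hUD i, eD.monotone hi⟩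
  have hU : #{u ∈ U | u ≤ eD j} ≤ j.val := by
    rw [← Fin.card_Iio j, ← card_map eU.toEmbedding]
    refine card_le_card fun x hx => ?_
    rw [mem_filter] at hx
    obtain ⟨i, rfl⟩ : x ∈ Set.range eU := by rw [range_orderEmbOfFin]; exact hx.1
    exact mem_map_of_mem _ (mem_Iio.mpr (eU.lt_iff_lt.mp (hx.2.trans_lt hdu)))
  have := hle (eD j)
  omega

section Matching

variable {α : Type*} [LinearOrder α] {U D : Finset α}

def matchingInvolution (e : U ≃ D) (x : α) : α :=
  if hx : x ∈ U then e ⟨x, hx⟩ else if hx : x ∈ D then e.symm ⟨x, hx⟩ else x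

variable (e : U ≃ D) {x : α}

lemma matchingInvolution_of_mem_left (hx : x ∈ U) : matchingInvolution e x = e ⟨x, hx⟩ :=
  dif_pos hx

lemma matchingInvolution_of_mem_right (hdisj : Disjoint U D) (hx : x ∈ D) :
    matchingInvolution e x = e.symm ⟨x, hx⟩ :=
  (dif_neg (disjoint_right.mp hdisj hx)).trans (dif_pos hx)

lemma matchingInvolution_of_notMem (hU : x ∉ U) (hD : x ∉ D) : matchingInvolution e x = x :=
  (dif_neg hU).trans (dif_neg hD)

lemma involutive_matchingInvolution (hdisj : Disjoint U D) : Involutive (matchingInvolution e) := by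
  intro x
  by_cases hU : x ∈ U
  · rw [matchingInvolution_of_mem_left e hU, matchingInvolution_of_mem_right e hdisj (e _).2]
    simp
  by_cases hD : x ∈ D
  · rw [matchingInvolution_of_mem_right e hdisj hD, matchingInvolution_of_mem_left e (e.symm _).2]
    simp
  rw [matchingInvolution_of_notMem e hU hD, matchingInvolution_of_notMem e hU hD]

lemma matchingInvolution_lt_of_mem_right (hdisj : Disjoint U D) (he : ∀ u : U, (u : α) < e u)
    (hx : x ∈ D) : matchingInvolution e x < x := by
  rw [matchingInvolution_of_mem_right e hdisj hx]
  simpa using he (e.symm ⟨x, hx⟩)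

lemma lt_matchingInvolution_iff (hdisj : Disjoint U D) (he : ∀ u : U, (u : α) < e u) :
    x < matchingInvolution e x ↔ x ∈ U := by
  refine ⟨fun h => ?_, fun hx => matchingInvolution_of_mem_left e hx ▸ he ⟨x, hx⟩⟩
  by_contra hU
  by_cases hD : x ∈ D
  · exact (matchingInvolution_lt_of_mem_right e hdisj he hD).not_gt h
  · exact h.ne (matchingInvolution_of_notMem e hU hD).symm

lemma matchingInvolution_lt_iff (hdisj : Disjoint U D) (he : ∀ u : U, (u : α) < e u) :
    matchingInvolution e x < x ↔ x ∈ D := by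
  refine ⟨fun h => ?_, matchingInvolution_lt_of_mem_right e hdisj he⟩
  by_contra hD
  by_cases hU : x ∈ U
  · exact ((lt_matchingInvolution_iff e hdisj he).mpr hU).not_gt h
  · exact h.ne (matchingInvolution_of_notMem e hU hD)

end Matching

lemma isMotzkinPath_iff_forall_take (l : List ℤ) :
    IsMotzkinPath l ↔
      (∀ s ∈ l, s = 1 ∨ s = 0 ∨ s = -1) ∧ l.sum = 0 ∧ ∀ t, 0 ≤ (l.take t).sum := by
  refine and_congr_right' (and_congr_right' ⟨fun h t => h _ (l.take_prefix t), ?_⟩)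
  rintro h p hp
  rw [List.prefix_iff_eq_take.mp hp]
  exact h _

lemma isMotzkinPath_ofFn_iff {n : ℕ} (f : Fin n → ℤ) :
    IsMotzkinPath (List.ofFn f) ↔
      (∀ i, f i = 1 ∨ f i = 0 ∨ f i = -1) ∧ ∑ i, f i = 0 ∧
        ∀ t : ℕ, 0 ≤ ∑ i with i.val < t, f i := by
  simp only [isMotzkinPath_iff_forall_take, List.mem_ofFn, List.sum_ofFn, List.sum_take_ofFn,
    forall_exists_index, forall_apply_eq_imp_iff]

section InvStep

variable {n : ℕ} {π : Perm (Fin n)} {i : Fin n}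

lemma invStep_eq_zero_iff : invStep π i = 0 ↔ π i = i := by
  unfold invStep; split_ifs <;> simp_all

lemma invStep_eq_one_iff : invStep π i = 1 ↔ i < π i := by
  unfold invStep; split_ifs <;> simp_all

lemma invStep_eq_neg_one_iff : invStep π i = -1 ↔ π i < i := by
  unfold invStep; split_ifs with h₁ h₂
  · simp [h₁]
  · simp [h₂.not_gt]
  · simpa using lt_of_le_of_ne (not_lt.mp h₂) h₁

lemma invStep_trichotomy (π : Perm (Fin n)) (i : Fin n) :
    invStep π i = 1 ∨ invStep π i = 0 ∨ invStep π i = -1 := by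
  unfold invStep; split_ifs <;> simp

end InvStep

def IsNonnesting {n : ℕ} (π : Perm (Fin n)) : Prop :=
  ∀ ⦃a b : Fin n⦄, a < b → a < π a → b < π b → π a < π b

section Involution

variable {n : ℕ} {π σ : Perm (Fin n)}

lemma invStep_ne_of_lt_of_apply_lt (hπ : Involutive π) (hnn : IsNonnesting π) ⦃x y : Fin n⦄
    (hxy : x < y) (hπxy : π y < π x) : invStep π x ≠ invStep π y := by
  intro hstep
  rcases invStep_trichotomy π x with h | h | h
  · exact (hnn hxy (invStep_eq_one_iff.mp h)
      (invStep_eq_one_iff.mp (hstep ▸ h))).not_gt hπxy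
  · rw [invStep_eq_zero_iff.mp h, invStep_eq_zero_iff.mp (hstep ▸ h)] at hπxy
    exact hπxy.not_gt hxy
  · have := hnn hπxy (by rw [hπ]; exact invStep_eq_neg_one_iff.mp (hstep ▸ h))
      (by rw [hπ]; exact invStep_eq_neg_one_iff.mp h)
    rw [hπ, hπ] at this
    exact this.not_gt hxy

theorem avoids4321_iff_isNonnesting (hπ : Involutive π) : Avoids4321 π ↔ IsNonnesting π := by
  constructor
  · intro h a b hab ha hb
    by_contra! hba
    have hlt : π b < π a := hba.lt_of_ne (π.injective.ne hab.ne')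
    exact h ⟨a, b, π b, π a, hab, hb, hlt, by rw [hπ, hπ]; exact ⟨hab, hb, hlt⟩⟩
  · -- four pairwise different steps among only three possible values
    rintro hnn ⟨a, b, c, d, hab, hbc, hcd, hdc, hcb, hba⟩
    have key := invStep_ne_of_lt_of_apply_lt hπ hnn
    have := key hab hba; have := key hbc hcb; have := key hcd hdc
    have := key (hab.trans hbc) (hcb.trans hba); have := key (hbc.trans hcd) (hdc.trans hcb)
    have := key (hab.trans (hbc.trans hcd)) (hdc.trans (hcb.trans hba))
    rcases invStep_trichotomy π a with _ | _ | _ <;>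
      rcases invStep_trichotomy π b with _ | _ | _ <;>
      rcases invStep_trichotomy π c with _ | _ | _ <;>
      rcases invStep_trichotomy π d with _ | _ | _ <;> omega

lemma sum_invStep (s : Finset (Fin n)) :
    ∑ i ∈ s, invStep π i = #{i ∈ s | i < π i} - #{i ∈ s | π i < i} := by
  simp only [sum_eq_card_filter_sub_card_filter s _ fun i _ => invStep_trichotomy π i,
    invStep_eq_one_iff, invStep_eq_neg_one_iff]

lemma card_deficiencies_eq_card_excedances (hπ : Involutive π) : #{i | π i < i} = #{i | i < π i} :=
  card_nbij' π π (fun i hi => by simpa [hπ i] using hi) (fun i hi => by simpa [hπ i] using hi)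
    (fun i _ => hπ i) (fun i _ => hπ i)

lemma card_deficiencies_le_card_excedances_below (hπ : Involutive π) (t : ℕ) :
    #{i | i.val < t ∧ π i < i} ≤ #{i | i.val < t ∧ i < π i} := by
  refine card_le_card_of_injOn π (fun i hi => ?_) π.injective.injOn
  simp only [coe_filter, mem_univ, true_and, Set.mem_ofPred_eq, hπ i] at hi ⊢
  exact ⟨lt_trans (Fin.lt_def.mp hi.2) hi.1, hi.2⟩

theorem isMotzkinPath_ofFn_invStep (hπ : Involutive π) : IsMotzkinPath (List.ofFn (invStep π)) := by
  refine (isMotzkinPath_ofFn_iff _).mpr ⟨invStep_trichotomy π, ?_, fun t => ?_⟩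
  · rw [sum_invStep, card_deficiencies_eq_card_excedances hπ, sub_self]
  · rw [sum_invStep, filter_filter, filter_filter, sub_nonneg, Nat.cast_le]
    exact card_deficiencies_le_card_excedances_below hπ t

lemma image_excedances (hπ : Involutive π) : π '' {i | i < π i} = {i | π i < i} := by
  ext x
  refine ⟨?_, fun hx => ⟨π x, by rwa [Set.mem_ofPred_eq, hπ], hπ x⟩⟩
  rintro ⟨i, hi, rfl⟩
  rwa [Set.mem_ofPred_eq, hπ]

lemma IsNonnesting.strictMonoOn (h : IsNonnesting π) : StrictMonoOn π {i | i < π i} :=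
  fun _ ha _ hb hab => h hab ha hb

theorem eq_of_invStep_eq (hπ : Involutive π) (hσ : Involutive σ) (hπn : IsNonnesting π)
    (hσn : IsNonnesting σ) (h : invStep π = invStep σ) : π = σ := by
  have hexc : {i | i < π i} = {i | i < σ i} := by
    ext i; simp only [Set.mem_ofPred_eq, ← invStep_eq_one_iff, h]
  have hdef : {i | π i < i} = {i | σ i < i} := by
    ext i; simp only [Set.mem_ofPred_eq, ← invStep_eq_neg_one_iff, h]
  -- both restrict to the unique increasing bijection from excedances onto deficiencies
  have heq : Set.EqOn π σ {i | i < π i} := by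
    refine StrictMonoOn.eqOn_of_image_eq (Set.toFinite _) hπn.strictMonoOn ?_ ?_
    · rw [hexc]; exact hσn.strictMonoOn
    · rw [image_excedances hπ, hexc, image_excedances hσ, hdef]
  ext x
  rcases invStep_trichotomy π x with hx | hx | hx
  · exact congrArg Fin.val (heq (invStep_eq_one_iff.mp hx))
  · rw [invStep_eq_zero_iff.mp hx, invStep_eq_zero_iff.mp (h ▸ hx)]
  · have hπx : π x ∈ {i | i < π i} := by
      rw [Set.mem_ofPred_eq, hπ]; exact invStep_eq_neg_one_iff.mp hx
    have hσπx : π (π x) = σ (π x) := heq hπx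
    rw [hπ] at hσπx
    exact congrArg Fin.val (hσ.eq_iff.mpr hσπx).symm

end Involution

section StepCounts

variable {n : ℕ} {f : Fin n → ℤ}

lemma card_down_steps_eq_card_up_steps (hf : IsMotzkinPath (List.ofFn f)) :
    #{i | f i = -1} = #{i | f i = 1} := by
  obtain ⟨hsteps, hsum, -⟩ := (isMotzkinPath_ofFn_iff f).mp hf
  have := sum_eq_card_filter_sub_card_filter univ f fun i _ => hsteps i
  omega

lemma card_down_steps_le_card_up_steps (hf : IsMotzkinPath (List.ofFn f)) (x : Fin n) :
    #{i | f i = -1 ∧ i ≤ x} ≤ #{i | f i = 1 ∧ i ≤ x} := by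
  obtain ⟨hsteps, -, hprefix⟩ := (isMotzkinPath_ofFn_iff f).mp hf
  have hseg (c : ℤ) : #{i | i.val < x.val + 1 ∧ f i = c} = #{i | f i = c ∧ i ≤ x} := by
    congr 1
    ext i
    simp only [mem_filter, mem_univ, true_and, Fin.le_def]
    omega
  have := hprefix (x.val + 1)
  rw [sum_eq_card_filter_sub_card_filter _ f fun i _ => hsteps i, filter_filter, filter_filter,
    hseg, hseg] at this
  omega

end StepCounts

theorem exists_involutive_isNonnesting_invStep_eq {n : ℕ} (f : Fin n → ℤ)
    (hf : IsMotzkinPath (List.ofFn f)) :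
    ∃ π : Perm (Fin n), Involutive π ∧ IsNonnesting π ∧ invStep π = f := by
  set U : Finset (Fin n) := {i | f i = 1}
  set D : Finset (Fin n) := {i | f i = -1}
  have hdisj : Disjoint U D := disjoint_filter.mpr fun i _ h₁ h₂ => by omega
  have hUD : #D = #U := card_down_steps_eq_card_up_steps hf
  have hle (x : Fin n) : #{d ∈ D | d ≤ x} ≤ #{u ∈ U | u ≤ x} := by
    simpa only [U, D, filter_filter] using card_down_steps_le_card_up_steps hf x
  let e : U ≃o D := (U.orderIsoOfFin rfl).symm.trans (D.orderIsoOfFin hUD)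
  have he (u : U) : (u : Fin n) < e u := by
    have := U.orderEmbOfFin_lt_orderEmbOfFin hUD hdisj hle ((U.orderIsoOfFin rfl).symm u)
    rwa [← coe_orderIsoOfFin_apply, OrderIso.apply_symm_apply, ← coe_orderIsoOfFin_apply] at this
  have hinv := involutive_matchingInvolution e.toEquiv hdisj
  have hexc (i : Fin n) := lt_matchingInvolution_iff e.toEquiv (x := i) hdisj he
  have hdef (i : Fin n) := matchingInvolution_lt_iff e.toEquiv (x := i) hdisj he
  refine ⟨hinv.toPerm, hinv, fun a b hab ha hb => ?_, funext fun i => ?_⟩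
  · simp only [Involutive.coe_toPerm, hexc] at ha hb ⊢
    rw [matchingInvolution_of_mem_left _ ha, matchingInvolution_of_mem_left _ hb]
    exact e.strictMono hab
  · rcases ((isMotzkinPath_ofFn_iff f).mp hf).1 i with h | h | h
    · rw [h, invStep_eq_one_iff, Involutive.coe_toPerm, hexc]
      exact mem_filter.mpr ⟨mem_univ _, h⟩
    · rw [h, invStep_eq_zero_iff, Involutive.coe_toPerm]
      exact matchingInvolution_of_notMem _ (by simp [U, h]) (by simp [D, h])
    · rw [h, invStep_eq_neg_one_iff, Involutive.coe_toPerm, hdef]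
      exact mem_filter.mpr ⟨mem_univ _, h⟩

lemma count_zero_ofFn_invStep {n : ℕ} (π : Perm (Fin n)) :
    (List.ofFn (invStep π)).count 0 = #{i | π i = i} := by
  simp only [List.count_ofFn_eq_card, invStep_eq_zero_iff]

theorem invCount4321_eq_motzkinHCount (n k : ℕ) : invCount4321 n k = motzkinHCount n k := by
  refine Nat.card_eq_of_bijective (fun π => ⟨List.ofFn (invStep π.1),
    isMotzkinPath_ofFn_invStep π.2.1, List.length_ofFn, (count_zero_ofFn_invStep _).trans π.2.2.2⟩)
    ⟨?_, ?_⟩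
  · rintro ⟨π, hπ, hπa, _⟩ ⟨σ, hσ, hσa, _⟩ hπσ
    rw [avoids4321_iff_isNonnesting hπ] at hπa
    rw [avoids4321_iff_isNonnesting hσ] at hσa
    exact Subtype.ext
      (eq_of_invStep_eq hπ hσ hπa hσa (List.ofFn_injective (congrArg Subtype.val hπσ)))
  · rintro ⟨l, hl, rfl, hcount⟩
    rw [← List.ofFn_get l] at hl
    obtain ⟨π, hπ, hπn, hstep⟩ := exists_involutive_isNonnesting_invStep_eq l.get hl
    refine ⟨⟨π, hπ, (avoids4321_iff_isNonnesting hπ).mpr hπn, ?_⟩, Subtype.ext ?_⟩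
    · rw [← count_zero_ofFn_invStep, hstep, List.ofFn_get, hcount]
    · simp only [hstep, List.ofFn_get]

section MotzkinPath

variable {l p q p' q' : List ℤ}

lemma IsMotzkinPath.sum_take_nonneg (h : IsMotzkinPath l) (t : ℕ) : 0 ≤ (l.take t).sum :=
  h.2.2 _ (l.take_prefix t)

lemma isMotzkinPath_nil : IsMotzkinPath [] := by
  simp [isMotzkinPath_iff_forall_take]

lemma isMotzkinPath_cons_zero : IsMotzkinPath (0 :: l) ↔ IsMotzkinPath l := by
  rw [isMotzkinPath_iff_forall_take, isMotzkinPath_iff_forall_take, ← Nat.and_forall_add_one]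
  simp

lemma not_isMotzkinPath_neg_one_cons : ¬ IsMotzkinPath ((-1) :: l) := fun h => by
  simpa using h.sum_take_nonneg 1

lemma IsMotzkinPath.glue (hp : IsMotzkinPath p) (hq : IsMotzkinPath q) :
    IsMotzkinPath (1 :: p ++ (-1) :: q) := by
  refine (isMotzkinPath_iff_forall_take _).mpr ⟨fun s hs => ?_, ?_, fun t => ?_⟩
  · simp only [List.cons_append, List.mem_cons, List.mem_append] at hs
    rcases hs with rfl | hs | rfl | hs
    · simp
    · exact hp.1 s hs
    · simp
    · exact hq.1 s hs
  · simp [hp.2.1, hq.2.1]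
  · cases t with
    | zero => simp
    | succ t =>
      have hq' : -1 ≤ (((-1 : ℤ) :: q).take (t - p.length)).sum := by
        cases t - p.length with
        | zero => simp
        | succ m => simpa using hq.sum_take_nonneg m
      simp only [List.cons_append, List.take_succ_cons, List.sum_cons, List.take_append,
        List.sum_append]
      linarith [hp.sum_take_nonneg t]

lemma eq_of_append_neg_one_eq (hp : IsMotzkinPath p) (hp' : IsMotzkinPath p')
    (h : p ++ (-1) :: q = p' ++ (-1) :: q') : p = p' ∧ q = q' := by
  -- `p ++ [-1]` sums to `-1`, so it cannot be a prefix of the Motzkin path `p'`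
  have hshort {p p' q q' : List ℤ} (hp : IsMotzkinPath p) (hp' : IsMotzkinPath p')
      (h : p ++ (-1) :: q = p' ++ (-1) :: q') : ¬ p.length < p'.length := fun hlt => by
    have htake := congrArg (fun l => (l.take (p.length + 1)).sum) h
    simp only [List.take_append, List.take_of_length_le (Nat.le_succ _), Nat.add_sub_cancel_left,
      Nat.sub_eq_zero_of_le hlt, List.take_zero, List.append_nil] at htake
    have := hp'.sum_take_nonneg (p.length + 1)
    simp [hp.2.1] at htake
    omega
  have hlen : p.length = p'.length :=
    le_antisymm (not_lt.mp (hshort hp' hp h.symm)) (not_lt.mp (hshort hp hp' h))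
  obtain ⟨rfl, hcons⟩ := List.append_inj h hlen
  exact ⟨rfl, List.cons_injective hcons⟩

lemma IsMotzkinPath.exists_first_return {t : List ℤ} (h : IsMotzkinPath (1 :: t)) :
    ∃ m, ∃ hm : m < t.length, t[m] = -1 ∧ IsMotzkinPath (t.take m) := by
  obtain ⟨hsteps, hsum, -⟩ := (isMotzkinPath_iff_forall_take _).mp h
  have hsum' : t.sum = -1 := by rw [List.sum_cons] at hsum; omega
  have hex : ∃ k, (t.take (k + 1)).sum < 0 :=
    ⟨t.length, by rw [List.take_of_length_le (Nat.le_succ _), hsum']; omega⟩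
  -- the path `1 :: t` first returns to height zero with the step `t[Nat.find hex]`
  set m := Nat.find hex
  have hneg : (t.take (m + 1)).sum < 0 := Nat.find_spec hex
  have hbefore (k : ℕ) (hk : k ≤ m) : 0 ≤ (t.take k).sum := by
    cases k with
    | zero => simp
    | succ k => exact not_lt.mp (Nat.find_min hex (by omega))
  have hm : m < t.length := by
    by_contra! hlen
    have := hbefore m le_rfl
    rw [List.take_of_length_le hlen] at this
    rw [List.take_of_length_le (by omega)] at hneg
    omega
  have hstep := List.sum_take_succ t m hm
  have := hsteps t[m] (List.mem_cons_of_mem 1 (List.getElem_mem hm))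
  have := hbefore m le_rfl
  refine ⟨m, hm, by omega, (isMotzkinPath_iff_forall_take _).mpr ⟨fun s hs =>
    hsteps s (List.mem_cons_of_mem 1 (List.mem_of_mem_take hs)), by omega, fun k => ?_⟩⟩
  rw [List.take_take]
  exact hbefore _ (min_le_right _ _)

lemma IsMotzkinPath.of_glue (h : IsMotzkinPath (1 :: p ++ (-1) :: q)) (hp : IsMotzkinPath p) :
    IsMotzkinPath q := by
  obtain ⟨hsteps, hsum, hprefix⟩ := (isMotzkinPath_iff_forall_take _).mp h
  refine (isMotzkinPath_iff_forall_take _).mpr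
    ⟨fun s hs => hsteps s (by simp [hs]), by simpa [hp.2.1] using hsum, fun k => ?_⟩
  have := hprefix (p.length + (k + 1) + 1)
  simp only [List.cons_append, List.take_succ_cons, List.take_append, List.sum_cons,
    List.sum_append, List.take_of_length_le (Nat.le_add_right p.length (k + 1)), hp.2.1,
    Nat.add_sub_cancel_left] at this
  omega

lemma IsMotzkinPath.exists_eq_glue {t : List ℤ} (h : IsMotzkinPath (1 :: t)) :
    ∃ p q, t = p ++ (-1) :: q ∧ IsMotzkinPath p ∧ IsMotzkinPath q := by
  obtain ⟨m, hm, htm, hp⟩ := h.exists_first_return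
  have ht : t = t.take m ++ (-1) :: t.drop (m + 1) := by
    rw [← htm, ← List.drop_eq_getElem_cons hm, List.take_append_drop]
  rw [ht, ← List.cons_append] at h
  exact ⟨_, _, ht, hp, h.of_glue hp⟩

end MotzkinPath

lemma finite_setOf_isMotzkinPath (n : ℕ) : {l | IsMotzkinPath l ∧ l.length = n}.Finite := by
  refine (Set.finite_range fun f : Fin n → ({1, 0, -1} : Finset ℤ) =>
    List.ofFn fun i => (f i : ℤ)).subset ?_
  rintro l ⟨hl, rfl⟩
  exact ⟨fun i => ⟨l.get i, by simpa using hl.1 _ (l.get_mem i)⟩, List.ofFn_get l⟩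

noncomputable def motzkinPaths (n : ℕ) : Finset (List ℤ) :=
  (finite_setOf_isMotzkinPath n).toFinset

@[simp]
lemma mem_motzkinPaths {n : ℕ} {l : List ℤ} :
    l ∈ motzkinPaths n ↔ IsMotzkinPath l ∧ l.length = n := by
  simp [motzkinPaths]

lemma motzkinHCount_eq_card (n k : ℕ) :
    motzkinHCount n k = #{l ∈ motzkinPaths n | l.count 0 = k} := by
  rw [← Nat.card_eq_finsetCard]
  exact Nat.card_congr (Equiv.subtypeEquivRight fun l => by simp [and_assoc])

lemma motzkinPaths_zero : motzkinPaths 0 = {[]} := by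
  ext l
  simp only [mem_motzkinPaths, List.length_eq_zero_iff, mem_singleton]
  exact ⟨And.right, fun h => ⟨h ▸ isMotzkinPath_nil, h⟩⟩

lemma motzkinPaths_one : motzkinPaths 1 = {[0]} := by
  ext l
  simp only [mem_motzkinPaths, List.length_eq_one_iff, mem_singleton]
  constructor
  · rintro ⟨hl, a, rfl⟩
    simpa using hl.2.1
  · rintro rfl
    exact ⟨isMotzkinPath_cons_zero.mpr isMotzkinPath_nil, 0, rfl⟩

lemma filter_head_eq_zero_motzkinPaths (n : ℕ) :
    {l ∈ motzkinPaths (n + 1) | l.head? = some 0} =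
      (motzkinPaths n).map ⟨List.cons 0, List.cons_injective⟩ := by
  ext l
  simp only [mem_filter, mem_motzkinPaths, mem_map, Function.Embedding.coeFn_mk]
  constructor
  · rintro ⟨⟨hl, hlen⟩, hhead⟩
    obtain ⟨t, rfl⟩ : ∃ t, l = 0 :: t := by
      cases l with
      | nil => simp at hhead
      | cons s t => exact ⟨t, by simpa using hhead⟩
    exact ⟨t, ⟨isMotzkinPath_cons_zero.mp hl, by simpa using hlen⟩, rfl⟩
  · rintro ⟨t, ⟨ht, rfl⟩, rfl⟩
    exact ⟨⟨isMotzkinPath_cons_zero.mpr ht, rfl⟩, rfl⟩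

lemma filter_head_ne_zero_motzkinPaths (n : ℕ) :
    {l ∈ motzkinPaths (n + 2) | l.head? ≠ some 0} =
      ((antidiagonal n).sigma fun ij => motzkinPaths ij.1 ×ˢ motzkinPaths ij.2).image
        fun x => 1 :: x.2.1 ++ (-1) :: x.2.2 := by
  ext l
  simp only [mem_filter, mem_motzkinPaths, mem_image, mem_sigma, mem_product,
    HasAntidiagonal.mem_antidiagonal, Sigma.exists, Prod.exists]
  constructor
  · rintro ⟨⟨hl, hlen⟩, hhead⟩
    obtain ⟨t, rfl⟩ : ∃ t, l = 1 :: t := by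
      cases l with
      | nil => simp at hlen
      | cons s t =>
        rcases hl.1 s List.mem_cons_self with rfl | rfl | rfl
        · exact ⟨t, rfl⟩
        · simp at hhead
        · exact (not_isMotzkinPath_neg_one_cons hl).elim
    obtain ⟨p, q, rfl, hp, hq⟩ := hl.exists_eq_glue
    refine ⟨p.length, q.length, p, q, ⟨?_, ⟨hp, rfl⟩, ⟨hq, rfl⟩⟩, rfl⟩
    simp only [List.length_cons, List.length_append] at hlen
    omega
  · rintro ⟨i, j, p, q, ⟨hij, ⟨hp, rfl⟩, ⟨hq, rfl⟩⟩, rfl⟩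
    refine ⟨⟨hp.glue hq, ?_⟩, by simp⟩
    simp only [List.cons_append, List.length_cons, List.length_append]
    omega

section MotzkinPoly

open Polynomial

noncomputable def motzkinPoly (n : ℕ) : ℚ[X] :=
  ∑ l ∈ motzkinPaths n, X ^ l.count 0

lemma motzkinPoly_eq_sum_range (n : ℕ) :
    motzkinPoly n = ∑ k ∈ range (n + 1), C (motzkinHCount n k : ℚ) * X ^ k := by
  have hmaps : ∀ l ∈ motzkinPaths n, l.count 0 ∈ range (n + 1) := fun l hl => by
    rw [mem_range, Nat.lt_succ_iff, ← (mem_motzkinPaths.mp hl).2]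
    exact List.count_le_length
  rw [motzkinPoly, ← sum_fiberwise_of_maps_to hmaps]
  refine sum_congr rfl fun k _ => ?_
  rw [sum_congr rfl fun l hl => by rw [(mem_filter.mp hl).2], sum_const, motzkinHCount_eq_card,
    map_natCast, nsmul_eq_mul]

lemma motzkinPoly_zero : motzkinPoly 0 = 1 := by
  simp [motzkinPoly, motzkinPaths_zero]

lemma motzkinPoly_one : motzkinPoly 1 = X := by
  simp [motzkinPoly, motzkinPaths_one]

lemma motzkinPoly_add_two (n : ℕ) : motzkinPoly (n + 2) =
    X * motzkinPoly (n + 1) + ∑ ij ∈ antidiagonal n, motzkinPoly ij.1 * motzkinPoly ij.2 := by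
  have hinj : Set.InjOn (fun x : (_ : ℕ × ℕ) × List ℤ × List ℤ => 1 :: x.2.1 ++ (-1) :: x.2.2)
      ((antidiagonal n).sigma fun ij => motzkinPaths ij.1 ×ˢ motzkinPaths ij.2) := by
    rintro ⟨⟨i, j⟩, p, q⟩ hx ⟨⟨i', j'⟩, p', q'⟩ hy hxy
    simp only [coe_sigma, Set.mem_sigma_iff, coe_product, Set.mem_prod, mem_coe,
      mem_motzkinPaths] at hx hy
    obtain ⟨rfl, rfl⟩ := eq_of_append_neg_one_eq hx.2.1.1 hy.2.1.1 (List.cons_injective hxy)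
    obtain ⟨⟨-, rfl⟩, -, rfl⟩ := hx.2
    obtain ⟨⟨-, rfl⟩, -, rfl⟩ := hy.2
    rfl
  rw [motzkinPoly, ← sum_filter_add_sum_filter_not _ (fun l => l.head? = some 0),
    filter_head_eq_zero_motzkinPaths, filter_head_ne_zero_motzkinPaths, sum_map, sum_image hinj,
    sum_sigma, motzkinPoly, mul_sum]
  congr 1
  · simp [pow_succ, mul_comm]
  · refine sum_congr rfl fun ij _ => ?_
    rw [motzkinPoly, motzkinPoly, sum_mul_sum, ← sum_product']
    simp [List.count_append, pow_add]

end MotzkinPoly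

lemma mk_motzkinPoly_eq : PowerSeries.mk motzkinPoly =
    1 + PowerSeries.C Polynomial.X * PowerSeries.X * PowerSeries.mk motzkinPoly
      + PowerSeries.X ^ 2 * PowerSeries.mk motzkinPoly ^ 2 := by
  refine PowerSeries.ext fun m => ?_
  rcases m with _ | _ | n
  · simp [motzkinPoly_zero]
  · simp [motzkinPoly_one, motzkinPoly_zero, mul_assoc, PowerSeries.coeff_X_pow_mul']
  · rw [mul_assoc, map_add, map_add, PowerSeries.coeff_C_mul, PowerSeries.coeff_succ_X_mul,
      PowerSeries.coeff_X_pow_mul', if_pos (by omega), show n + 1 + 1 - 2 = n from rfl, pow_two,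
      PowerSeries.coeff_mul]
    simp [motzkinPoly_add_two]

/-- The two-variable generating function `f(x,y)` of 4321-avoiding involutions,
with `x` marking length and `y` fixed points, satisfies
`x² f² − (1 − xy) f + 1 = 0`, i.e. `f = (1 − xy − √(1 − 2xy + x²y² − 4x²))/(2x²)`;
equivalently the number of 4321-avoiding involutions of length `n` with `k` fixed
points equals the number of Motzkin paths of length `n` with `k` horizontal steps. -/
theorem stmt9 :
    (∀ n k : ℕ, invCount4321 n k = motzkinHCount n k) ∧
    (∀ F : PowerSeries (Polynomial ℚ),
      (F = PowerSeries.mk fun n =>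
        ∑ k ∈ Finset.range (n + 1),
          Polynomial.C ((invCount4321 n k : ℚ)) * Polynomial.X ^ k) →
      PowerSeries.X ^ 2 * F ^ 2
        - (1 - PowerSeries.C (R := Polynomial ℚ) Polynomial.X * PowerSeries.X) * F + 1
        = 0) := by
  refine ⟨invCount4321_eq_motzkinHCount, fun F hF => ?_⟩
  have hF' : F = PowerSeries.mk motzkinPoly := by
    simp only [hF, invCount4321_eq_motzkinHCount, ← motzkinPoly_eq_sum_range]
  rw [hF']
  linear_combination -mk_motzkinPoly_eq
end

section
/- The generating function of involutions avoiding both 4321 and 132 is f(x) = −(x − x³ + x⁴)/((x−1)³(1+x)) = x + 2x² + 3x³ + 5x⁴ + ⋯, so the number of such involutions of length n is 1 + ⌈n/2⌉·⌊n/2⌋. -/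
/-!
An involution `π ≠ 1` avoiding 132 and 4321 exchanges an initial block `[0, k)` with a block
`[t, t + k)`, `k ≤ t`, in order, and fixes everything else. Avoiding 132 forces the excedances
`i < π i` to form an initial segment lying below every excedance value, and avoiding 4321 makes
`π` increasing on them; one more 132 pattern shows that consecutive excedances have consecutive
images. Hence these involutions are the identity and the block swaps with `1 ≤ k ≤ t`,
`t + k ≤ n`, of which there are `⌈n/2⌉⌊n/2⌋`. The resulting count satisfies
`c (n + 2) = c n + n + 1`, which is the recurrence encoded by the denominator `(x - 1)³(1 + x)`.
-/

open Equiv Finset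

/-- Number of involutions of length `n` avoiding 4321 and 132. -/
noncomputable def count4321x132 (n : ℕ) : ℕ :=
  Nat.card {π : Equiv.Perm (Fin n) // Function.Involutive ⇑π ∧ Avoids4321 π ∧
    Avoids132 π}

open Function

-- The guard `i + t < n` only makes the definition total; it holds whenever `t + k ≤ n`.
def blockSwapFun (n t k : ℕ) (i : Fin n) : Fin n :=
  if h : i.val < k ∧ i.val + t < n then ⟨i.val + t, h.2⟩
  else if t ≤ i.val ∧ i.val < t + k then ⟨i.val - t, by omega⟩
  else i

section BlockSwap

variable {n t k : ℕ}

lemma blockSwapFun_val (hkt : k ≤ t) (htn : t + k ≤ n) (i : Fin n) :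
    (i.val < k ∧ (blockSwapFun n t k i).val = i.val + t) ∨
    (k ≤ i.val ∧ i.val < t ∧ (blockSwapFun n t k i).val = i.val) ∨
    (t ≤ i.val ∧ i.val < t + k ∧ (blockSwapFun n t k i).val = i.val - t) ∨
    (t + k ≤ i.val ∧ (blockSwapFun n t k i).val = i.val) := by
  unfold blockSwapFun
  split_ifs with h₁ h₂
  · exact Or.inl ⟨h₁.1, rfl⟩
  · exact Or.inr (Or.inr (Or.inl ⟨h₂.1, h₂.2, rfl⟩))
  · omega

lemma blockSwapFun_involutive (hkt : k ≤ t) (htn : t + k ≤ n) :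
    Involutive (blockSwapFun n t k) := fun i => by
  have hi := blockSwapFun_val hkt htn i
  have hfi := blockSwapFun_val hkt htn (blockSwapFun n t k i)
  exact Fin.ext (by omega)

def blockSwap (n t k : ℕ) (hkt : k ≤ t) (htn : t + k ≤ n) : Perm (Fin n) :=
  (blockSwapFun_involutive hkt htn).toPerm

variable (hkt : k ≤ t) (htn : t + k ≤ n)

lemma blockSwap_val (i : Fin n) :
    (i.val < k ∧ (blockSwap n t k hkt htn i).val = i.val + t) ∨
    (k ≤ i.val ∧ i.val < t ∧ (blockSwap n t k hkt htn i).val = i.val) ∨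
    (t ≤ i.val ∧ i.val < t + k ∧ (blockSwap n t k hkt htn i).val = i.val - t) ∨
    (t + k ≤ i.val ∧ (blockSwap n t k hkt htn i).val = i.val) :=
  blockSwapFun_val hkt htn i

lemma avoids4321_blockSwap : Avoids4321 (blockSwap n t k hkt htn) := by
  rintro ⟨a, b, c, d, hab, hbc, hcd, hdc, hcb, hba⟩
  have := blockSwap_val hkt htn a
  have := blockSwap_val hkt htn b
  have := blockSwap_val hkt htn c
  have := blockSwap_val hkt htn d
  simp only [Fin.lt_def] at *
  omega

lemma avoids132_blockSwap : Avoids132 (blockSwap n t k hkt htn) := by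
  rintro ⟨a, b, c, hab, hbc, hac, hcb⟩
  have := blockSwap_val hkt htn a
  have := blockSwap_val hkt htn b
  have := blockSwap_val hkt htn c
  simp only [Fin.lt_def] at *
  omega

lemma blockSwap_ne_one (hk : 1 ≤ k) : blockSwap n t k hkt htn ≠ 1 := fun h => by
  have := blockSwap_val hkt htn ⟨0, by omega⟩
  simp only [h, Perm.coe_one, id_eq] at this
  omega

lemma eq_and_eq_of_blockSwap_eq {t' k' : ℕ} (hkt' : k' ≤ t') (htn' : t' + k' ≤ n) (hk : 1 ≤ k)
    (hk' : 1 ≤ k') (h : blockSwap n t k hkt htn = blockSwap n t' k' hkt' htn') :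
    t = t' ∧ k = k' := by
  have h0 := blockSwap_val hkt htn ⟨0, by omega⟩
  have h0' := blockSwap_val hkt' htn' ⟨0, by omega⟩
  have hm := blockSwap_val hkt htn ⟨min k k', by omega⟩
  have hm' := blockSwap_val hkt' htn' ⟨min k k', by omega⟩
  simp only [h] at h0 hm h0' hm'
  omega

end BlockSwap

section Classification

variable {n : ℕ} {π : Perm (Fin n)}

lemma Avoids132.lt_apply_of_lt_of_lt_apply (h132 : Avoids132 π) (hinv : Involutive π)
    {a b : Fin n} (ha : a < π a) (hba : b < a) : b < π b := by
  by_contra! hb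
  exact h132 ⟨b, a, π a, hba, ha, by rw [hinv]; exact hb.trans_lt hba, by rw [hinv]; exact ha⟩

lemma Avoids132.lt_apply_of_lt_apply (h132 : Avoids132 π) (hinv : Involutive π)
    {a b : Fin n} (ha : a < π a) (hb : b < π b) : a < π b := by
  rcases le_or_gt a b with hab | hba
  · exact hab.trans_lt hb
  by_contra! h
  rcases h.lt_or_eq with h | h
  · exact h132 ⟨π b, a, π a, h, ha, by rw [hinv, hinv]; exact hba, by rw [hinv]; exact ha⟩
  · rw [← h, hinv] at ha
    exact lt_asymm ha hb

lemma Avoids4321.strictMonoOn_excedances (h4321 : Avoids4321 π) (hinv : Involutive π) :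
    StrictMonoOn π {a | a < π a} := by
  intro a ha b hb hab
  by_contra! h
  rcases h.lt_or_eq with h | h
  · exact h4321 ⟨a, b, π b, π a, hab, hb, h, by rw [hinv, hinv]; exact hab,
      by rw [hinv]; exact hb, h⟩
  · exact hab.ne (π.injective h).symm

variable (h132 : Avoids132 π) (h4321 : Avoids4321 π) (hinv : Involutive π)
include h132 h4321 hinv

lemma apply_val_succ_of_excedances {b c : Fin n} (hb : b < π b) (hc : c < π c)
    (hbc : c.val = b.val + 1) : (π c).val = (π b).val + 1 := by
  have hmono := h4321.strictMonoOn_excedances hinv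
  have hlt : (π b).val < (π c).val := hmono hb hc (Fin.lt_def.2 (by omega))
  by_contra hne
  -- Avoiding 132 forces `π j` to be an excedance; monotonicity then puts it strictly between
  -- `b` and `c`.
  set j : Fin n := ⟨(π b).val + 1, by omega⟩
  have hbj : π b < j := Nat.lt_succ_self _
  have hjc : j < π c := show (π b).val + 1 < (π c).val by omega
  have hcj : c < j := (h132.lt_apply_of_lt_apply hinv hc hb).trans hbj
  have hjb : π j < π b := by
    rcases lt_trichotomy (π j) (π b) with h | h | h
    · exact h
    · rw [π.injective h, Fin.lt_def] at hcj
      omega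
    rcases lt_trichotomy (π j) (π c) with h' | h' | h'
    · exact absurd ⟨b, c, j, Fin.lt_def.2 (by omega), hcj, h, h'⟩ h132
    · exact absurd (π.injective h') hcj.ne'
    · exact absurd (h132.lt_apply_of_lt_apply hinv (hjc.trans h') hb) (not_lt.2 hbj.le)
  have hm : π j < π (π j) := by
    rw [hinv j]
    exact hjb.trans hbj
  have hbm := (hmono.lt_iff_lt hb hm).1 (by rwa [hinv])
  have hmc := (hmono.lt_iff_lt hm hc).1 (by rwa [hinv])
  rw [Fin.lt_def] at hbm hmc
  omega

lemma apply_val_eq_apply_zero_add {a : Fin n} (ha : a < π a) :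
    (π a).val = (π ⟨0, a.pos⟩).val + a.val := by
  obtain ⟨i, hi⟩ := a
  induction i with
  | zero => rfl
  | succ i ih =>
    have hi' : (⟨i, by omega⟩ : Fin n) < π ⟨i, by omega⟩ :=
      h132.lt_apply_of_lt_of_lt_apply hinv ha (Fin.lt_def.2 (by simp))
    rw [apply_val_succ_of_excedances h132 h4321 hinv hi' ha rfl, ih _ hi']
    rfl

theorem exists_eq_blockSwap (hne : π ≠ 1) :
    ∃ t k, ∃ (hkt : k ≤ t) (htn : t + k ≤ n), 1 ≤ k ∧ π = blockSwap n t k hkt htn := by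
  obtain ⟨e, he⟩ : ∃ e, e < π e := by
    by_contra! h
    exact hne (Equiv.ext fun i => (h i).antisymm (by simpa only [hinv i] using h (π i)))
  obtain ⟨a, ha, hmax⟩ := (univ.filter fun i => i < π i).exists_max_image id ⟨e, by simpa⟩
  replace ha : a < π a := (mem_filter.1 ha).2
  have hexc : ∀ i, i < π i ↔ i ≤ a := fun i =>
    ⟨fun h => hmax i (by simpa), fun h => h.lt_or_eq.elim
      (h132.lt_apply_of_lt_of_lt_apply hinv ha) (· ▸ ha)⟩
  set z : Fin n := ⟨0, a.pos⟩
  have hz : z < π z := (hexc z).2 (Fin.le_def.2 (Nat.zero_le _))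
  have hform : ∀ i ≤ a, (π i).val = (π z).val + i.val := fun i hi =>
    apply_val_eq_apply_zero_add h132 h4321 hinv ((hexc i).2 hi)
  have hat : a.val < (π z).val := h132.lt_apply_of_lt_apply hinv ha hz
  have hπa := hform a le_rfl
  have hdef : ∀ i : Fin n, (π z).val ≤ i.val → i.val ≤ (π z).val + a.val →
      (π i).val = i.val - (π z).val := fun i h₁ h₂ => by
    have hm : π ⟨i.val - (π z).val, by omega⟩ = i := Fin.ext <| by
      rw [hform _ (show i.val - (π z).val ≤ a.val by omega)]
      exact Nat.add_sub_of_le h₁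
    conv_lhs => rw [← hm]
    rw [hinv]
  have hfix : ∀ i : Fin n, a < i → (π i).val < i.val → (π z).val ≤ i.val ∧
      i.val ≤ (π z).val + a.val := fun i hai hlt => by
    have hia : π i ≤ a := (hexc _).1 (by rwa [hinv])
    have hm := hform (π i) hia
    rw [hinv] at hm
    rw [Fin.le_def] at hia
    omega
  refine ⟨(π z).val, a.val + 1, by omega, by omega, by omega, Equiv.ext fun i => Fin.ext ?_⟩
  have hsw := blockSwap_val (n := n) (t := (π z).val) (k := a.val + 1) (by omega) (by omega) i
  by_cases hia : i ≤ a
  · have := hform i hia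
    rw [Fin.le_def] at hia
    omega
  by_cases hi : (π z).val ≤ i.val ∧ i.val ≤ (π z).val + a.val
  · have := hdef i hi.1 hi.2
    omega
  have hle : π i ≤ i := not_lt.1 (mt (hexc i).1 hia)
  have := mt (hfix i (not_le.1 hia)) hi
  rw [Fin.le_def] at hle
  omega

end Classification

def blockSwapParams (n : ℕ) : Finset (ℕ × ℕ) :=
  (range (n + 1) ×ˢ range (n + 1)).filter fun p => 1 ≤ p.2 ∧ p.2 ≤ p.1 ∧ p.1 + p.2 ≤ n

lemma mem_blockSwapParams {n : ℕ} {p : ℕ × ℕ} :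
    p ∈ blockSwapParams n ↔ 1 ≤ p.2 ∧ p.2 ≤ p.1 ∧ p.1 + p.2 ≤ n := by
  simp only [blockSwapParams, mem_filter, mem_product, mem_range]
  omega

lemma card_blockSwapParams (n : ℕ) : #(blockSwapParams n) = (n + 1) / 2 * (n / 2) := by
  induction n with
  | zero => rfl
  | succ n ih =>
    set diag := (Icc 1 ((n + 1) / 2)).image fun k => (n + 1 - k, k)
    have hsplit : blockSwapParams (n + 1) = blockSwapParams n ∪ diag := by
      ext ⟨t, k⟩
      simp only [diag, mem_union, mem_blockSwapParams, mem_image, mem_Icc, Prod.mk.injEq]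
      constructor
      · intro h
        by_cases htk : t + k ≤ n
        · exact Or.inl ⟨h.1, h.2.1, htk⟩
        · exact Or.inr ⟨k, by omega, by omega, rfl⟩
      · rintro (h | ⟨k, hk, rfl, rfl⟩) <;> omega
    have hdisj : Disjoint (blockSwapParams n) diag := by
      simp only [diag, disjoint_left, mem_blockSwapParams, mem_image, not_exists, not_and]
      rintro _ h k - rfl
      omega
    have hdiag : #diag = (n + 1) / 2 := by
      rw [card_image_of_injective _ fun k k' h => congrArg Prod.snd h, Nat.card_Icc,
        Nat.add_sub_cancel]
    rw [hsplit, card_union_of_disjoint hdisj, ih, hdiag,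
      show (n + 1 + 1) / 2 = n / 2 + 1 by omega]
    ring

lemma avoids4321_one {n : ℕ} : Avoids4321 (1 : Perm (Fin n)) :=
  fun ⟨_, _, _, _, _, _, hcd, hdc, _⟩ => lt_asymm hcd hdc

lemma avoids132_one {n : ℕ} : Avoids132 (1 : Perm (Fin n)) :=
  fun ⟨_, _, _, _, hbc, _, hcb⟩ => lt_asymm hbc hcb

def blockSwapOrOne (n : ℕ) : Option (blockSwapParams n) →
    {π : Perm (Fin n) // Involutive π ∧ Avoids4321 π ∧ Avoids132 π}
  | none => ⟨1, fun _ => rfl, avoids4321_one, avoids132_one⟩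
  | some ⟨(t, k), hp⟩ =>
    have hkt : k ≤ t := (mem_blockSwapParams.1 hp).2.1
    have htn : t + k ≤ n := (mem_blockSwapParams.1 hp).2.2
    ⟨blockSwap n t k hkt htn, blockSwapFun_involutive hkt htn, avoids4321_blockSwap hkt htn,
      avoids132_blockSwap hkt htn⟩

lemma blockSwapOrOne_bijective (n : ℕ) : Bijective (blockSwapOrOne n) := by
  constructor
  · rintro (_ | ⟨⟨t, k⟩, hp⟩) (_ | ⟨⟨t', k'⟩, hp'⟩) h <;>
      simp only [blockSwapOrOne, Subtype.mk.injEq] at h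
    · rfl
    · exact absurd h.symm (blockSwap_ne_one _ _ (mem_blockSwapParams.1 hp').1)
    · exact absurd h (blockSwap_ne_one _ _ (mem_blockSwapParams.1 hp).1)
    · obtain ⟨rfl, rfl⟩ := eq_and_eq_of_blockSwap_eq _ _ _ _ (mem_blockSwapParams.1 hp).1
        (mem_blockSwapParams.1 hp').1 h
      rfl
  · rintro ⟨π, hinv, h4321, h132⟩
    by_cases hne : π = 1
    · exact ⟨none, Subtype.ext hne.symm⟩
    obtain ⟨t, k, hkt, htn, hk, rfl⟩ := exists_eq_blockSwap h132 h4321 hinv hne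
    exact ⟨some ⟨(t, k), mem_blockSwapParams.2 ⟨hk, hkt, htn⟩⟩, rfl⟩

theorem count4321x132_eq (n : ℕ) : count4321x132 n = 1 + (n + 1) / 2 * (n / 2) := by
  rw [count4321x132, ← Nat.card_congr (Equiv.ofBijective _ (blockSwapOrOne_bijective n)),
    Finite.card_option, Nat.card_eq_finsetCard, card_blockSwapParams, add_comm]

lemma count4321x132_add_two (n : ℕ) :
    count4321x132 (n + 2) = count4321x132 n + n + 1 := by
  rw [count4321x132_eq, count4321x132_eq, show (n + 2 + 1) / 2 = (n + 1) / 2 + 1 by omega,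
    Nat.add_div_right n two_pos]
  have : (n + 1) / 2 + n / 2 = n := by omega
  linarith

open PowerSeries in
theorem mk_count4321x132_mul :
    (mk fun n => if n = 0 then (0 : ℚ) else (count4321x132 n : ℚ)) * ((X - 1) ^ 3 * (1 + X)) =
      -(X - X ^ 3 + X ^ 4) := by
  set A : ℚ⟦X⟧ := mk fun n => if n = 0 then (0 : ℚ) else (count4321x132 n : ℚ)
  rw [show A * ((X - 1) ^ 3 * (1 + X)) = A * X ^ 4 - 2 • (A * X ^ 3) + 2 • (A * X ^ 1) - A by ring]
  ext n
  simp only [map_sub, map_add, map_neg, map_nsmul, coeff_mul_X_pow', coeff_X_pow, A, coeff_mk,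
    coeff_X]
  rcases lt_or_ge n 5 with hn | hn
  · interval_cases n <;> norm_num [count4321x132_eq]
  obtain ⟨m, rfl⟩ := Nat.exists_eq_add_of_le' hn
  have h3 : count4321x132 (m + 3) = count4321x132 (m + 1) + m + 2 :=
    count4321x132_add_two (m + 1)
  have h4 : count4321x132 (m + 4) = count4321x132 (m + 2) + m + 3 :=
    count4321x132_add_two (m + 2)
  have h5 : count4321x132 (m + 5) = count4321x132 (m + 3) + m + 4 :=
    count4321x132_add_two (m + 3)
  simp only [le_add_iff_nonneg_left, zero_le, ↓reduceIte, Nat.reduceSubDiff, Nat.add_eq_zero_iff,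
    one_ne_zero, and_false, OfNat.ofNat_ne_zero, nsmul_eq_mul, Nat.cast_ofNat, Nat.add_one_sub_one,
    Nat.reduceEqDiff, sub_self, add_zero, neg_zero, h5, h4, h3]
  push_cast
  ring

/-- `f(x) = −(x − x³ + x⁴)/((x−1)³(1+x))`, and the number of involutions of
length `n` avoiding 4321 and 132 is `1 + ⌈n/2⌉·⌊n/2⌋`. -/
theorem stmt12 :
    (∀ n : ℕ, 1 ≤ n → count4321x132 n = 1 + (n + 1) / 2 * (n / 2)) ∧
    (PowerSeries.mk fun n => if n = 0 then (0 : ℚ) else (count4321x132 n : ℚ)) *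
        ((PowerSeries.X - 1) ^ 3 * (1 + PowerSeries.X))
      = -(PowerSeries.X - PowerSeries.X ^ 3 + PowerSeries.X ^ 4) :=
  ⟨fun n _ => count4321x132_eq n, mk_count4321x132_mul⟩
end

section
/- The number of involutions of length n avoiding both 4321 and 312 satisfies the Tribonacci recurrence: if a_n denotes this count, then a_n = a_{n−1} + a_{n−2} + a_{n−3} for n ≥ 4, with generating function f(x) = (x + x² + x³)/(1 − x − x² − x³), giving the sequence 1, 2, 4, 7, 13, 24, 44, 81, …. -/
/-!
Let `π` be an involution avoiding 4321 and 312, and `k = π 0`. Avoiding 312 forces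
`π j < k` for `0 < j < k`; if `k ≥ 3`, positions `0, 1, 2` then carry a 312, or together with
position `k` (where `π k = 0`) a 4321. So `k ≤ 2`, `π` reverses `{0, …, k}` and leaves the
remaining positions invariant, acting there as a smaller involution of the same kind.
Conversely a decreasing block of length `m ≤ 3` followed by such an involution is again one,
so sorting by `π 0 ∈ {0, 1, 2}` gives `a (n + 3) = a (n + 2) + a (n + 1) + a n`, with
`a 0 = a 1 = 1` and `a 2 = 2`.
-/

open Equiv Finset

/-- Number of involutions of length `n` avoiding 4321 and 312. -/
noncomputable def count4321x312 (n : ℕ) : ℕ :=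
  Nat.card {π : Equiv.Perm (Fin n) // Function.Involutive ⇑π ∧ Avoids4321 π ∧
    Avoids312 π}


section Restriction

variable {N t : ℕ} {f : Fin t → Fin N} {τ : Perm (Fin t)} {π : Perm (Fin N)}

theorem Avoids312.of_semiconj (hf : StrictMono f) (h : Function.Semiconj f τ π)
    (h312 : Avoids312 π) : Avoids312 τ := by
  rintro ⟨a, b, c, hab, hbc, h₁, h₂⟩
  exact h312 ⟨f a, f b, f c, hf hab, hf hbc, by simpa only [h.eq] using hf h₁,
    by simpa only [h.eq] using hf h₂⟩

theorem Avoids4321.of_semiconj (hf : StrictMono f) (h : Function.Semiconj f τ π)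
    (h4321 : Avoids4321 π) : Avoids4321 τ := by
  rintro ⟨a, b, c, d, hab, hbc, hcd, h₁, h₂, h₃⟩
  exact h4321 ⟨f a, f b, f c, f d, hf hab, hf hbc, hf hcd, by simpa only [h.eq] using hf h₁,
    by simpa only [h.eq] using hf h₂, by simpa only [h.eq] using hf h₃⟩

end Restriction

abbrev GoodInvolution (n : ℕ) :=
  {π : Perm (Fin n) // Function.Involutive ⇑π ∧ Avoids4321 π ∧ Avoids312 π}

namespace GoodInvolution

section Structure

variable {N : ℕ} [NeZero N] {π : Perm (Fin N)}

theorem apply_lt_apply_zero (hinv : Function.Involutive π) (h312 : Avoids312 π) {j : Fin N}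
    (h0 : 0 < j) (hj : j < π 0) : π j < π 0 := by
  have hne : π j ≠ π 0 := π.injective.ne h0.ne'
  by_contra! hge
  exact h312 ⟨0, π 0, π j, h0.trans hj, lt_of_le_of_ne hge hne.symm,
    by rw [hinv, hinv]; exact h0, by rw [hinv]; exact hj⟩

theorem apply_zero_le_two (hinv : Function.Involutive π) (h4321 : Avoids4321 π)
    (h312 : Avoids312 π) : (π 0).val ≤ 2 := by
  by_contra! hk
  set i₁ : Fin N := ⟨1, by omega⟩
  set i₂ : Fin N := ⟨2, by omega⟩
  have h01 : 0 < i₁ := by simp [i₁, Fin.lt_def]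
  have h12 : i₁ < i₂ := by simp [i₁, i₂, Fin.lt_def]
  have h2k : i₂ < π 0 := Fin.lt_def.2 (by simp only [i₂]; omega)
  have h1 := apply_lt_apply_zero hinv h312 h01 (h12.trans h2k)
  have h2 := apply_lt_apply_zero hinv h312 (h01.trans h12) h2k
  rcases lt_or_gt_of_ne (π.injective.ne h12.ne) with h | h
  · exact h312 ⟨0, i₁, i₂, h01, h12, h, h2⟩
  · have h0 : π (π 0) < π i₂ := by
      rw [hinv, Fin.pos_iff_ne_zero, ← hinv 0, π.injective.ne_iff]
      exact h2k.ne
    exact h4321 ⟨0, i₁, i₂, π 0, h01, h12, h2k, h0, h, h1⟩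

theorem apply_of_le_apply_zero (hinv : Function.Involutive π) (h4321 : Avoids4321 π)
    (h312 : Avoids312 π) {i : Fin N} (hi : i ≤ π 0) : (π i).val = (π 0).val - i.val := by
  have hk := apply_zero_le_two hinv h4321 h312
  rcases eq_or_lt_of_le hi with rfl | hi
  · rw [hinv]; simp
  rcases (Fin.zero_le i).eq_or_lt with rfl | h0
  · simp
  have hlt := apply_lt_apply_zero hinv h312 h0 hi
  have hne : π i ≠ 0 := by
    rw [← hinv 0, π.injective.ne_iff]; exact hi.ne
  omega

theorem apply_zero_lt_apply (hinv : Function.Involutive π) (h4321 : Avoids4321 π)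
    (h312 : Avoids312 π) {i : Fin N} (hi : π 0 < i) : π 0 < π i := by
  by_contra! hle
  have := apply_of_le_apply_zero hinv h4321 h312 hle
  rw [hinv] at this
  omega

end Structure

section RevSum

variable {m t : ℕ} {τ : Perm (Fin t)}

def revSum (m : ℕ) (τ : Perm (Fin t)) : Perm (Fin (m + t)) :=
  finSumFinEquiv.permCongr (Fin.revPerm.sumCongr τ)

@[simp]
theorem revSum_castAdd (j : Fin m) : revSum m τ (Fin.castAdd t j) = Fin.castAdd t j.rev := by
  simp [revSum]

@[simp]
theorem revSum_natAdd (j : Fin t) : revSum m τ (Fin.natAdd m j) = Fin.natAdd m (τ j) := by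
  simp [revSum]

theorem revSum_val_of_lt {i : Fin (m + t)} (hi : i.val < m) :
    (revSum m τ i).val = m - 1 - i.val := by
  obtain ⟨j, rfl⟩ : ∃ j : Fin m, Fin.castAdd t j = i := ⟨⟨i, hi⟩, rfl⟩
  simp only [revSum_castAdd, Fin.val_castAdd, Fin.val_rev]
  omega

theorem revSum_val_of_le {i : Fin (m + t)} (hi : m ≤ i.val) :
    (revSum m τ i).val = m + (τ ⟨i.val - m, by omega⟩).val := by
  obtain ⟨j, rfl⟩ : ∃ j : Fin t, Fin.natAdd m j = i :=
    ⟨⟨i.val - m, by omega⟩, Fin.ext (by simp only [Fin.val_natAdd]; omega)⟩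
  simp

theorem revSum_involutive (hτ : Function.Involutive τ) : Function.Involutive (revSum m τ) := by
  intro i
  induction i using Fin.addCases <;> simp [hτ _]

theorem revSum_injective : Function.Injective (revSum m (t := t)) := by
  intro τ σ h
  refine Equiv.ext fun j => ?_
  simpa using congr($h (Fin.natAdd m j))

theorem revSum_apply_zero [NeZero (m + t)] (hm : 1 ≤ m) : (revSum m τ 0).val = m - 1 := by
  rw [revSum_val_of_lt (by rw [Fin.val_zero]; omega), Fin.val_zero, Nat.sub_zero]

theorem avoids312_revSum (h312 : Avoids312 τ) : Avoids312 (revSum m τ) := by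
  rintro ⟨a, b, c, hab, hbc, h₁, h₂⟩
  by_cases ha : a.val < m
  · -- the values below `m` sit at the positions below `m`, where `revSum m τ` decreases
    have hc : c.val < m := by
      by_contra! hc
      have := revSum_val_of_le (τ := τ) hc
      have := revSum_val_of_lt (τ := τ) ha
      omega
    have := revSum_val_of_lt (τ := τ) hc
    have := revSum_val_of_lt (τ := τ) (show b.val < m by omega)
    omega
  · have := revSum_val_of_le (τ := τ) (show m ≤ a.val by omega)
    have := revSum_val_of_le (τ := τ) (show m ≤ b.val by omega)
    have := revSum_val_of_le (τ := τ) (show m ≤ c.val by omega)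
    exact h312 ⟨⟨a - m, by omega⟩, ⟨b - m, by omega⟩, ⟨c - m, by omega⟩,
      Fin.mk_lt_mk.2 (by omega), Fin.mk_lt_mk.2 (by omega), by omega, by omega⟩

theorem avoids4321_revSum (hm : m ≤ 3) (h4321 : Avoids4321 τ) : Avoids4321 (revSum m τ) := by
  rintro ⟨a, b, c, d, hab, hbc, hcd, h₁, h₂, h₃⟩
  by_cases ha : a.val < m
  · -- then all four values, hence all four positions, are below `m ≤ 3`
    have hd : d.val < m := by
      by_contra! hd
      have := revSum_val_of_le (τ := τ) hd
      have := revSum_val_of_lt (τ := τ) ha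
      omega
    omega
  · have := revSum_val_of_le (τ := τ) (show m ≤ a.val by omega)
    have := revSum_val_of_le (τ := τ) (show m ≤ b.val by omega)
    have := revSum_val_of_le (τ := τ) (show m ≤ c.val by omega)
    have := revSum_val_of_le (τ := τ) (show m ≤ d.val by omega)
    exact h4321 ⟨⟨a - m, by omega⟩, ⟨b - m, by omega⟩, ⟨c - m, by omega⟩, ⟨d - m, by omega⟩,
      Fin.mk_lt_mk.2 (by omega), Fin.mk_lt_mk.2 (by omega), Fin.mk_lt_mk.2 (by omega),
      by omega, by omega, by omega⟩

end RevSum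


theorem exists_revSum_eq {m t : ℕ} [NeZero (m + t)] {π : Perm (Fin (m + t))}
    (hinv : Function.Involutive π) (h4321 : Avoids4321 π) (h312 : Avoids312 π)
    (h0 : (π 0).val = m - 1) (hm : 1 ≤ m) :
    ∃ τ : Perm (Fin t), Function.Involutive τ ∧ Avoids4321 τ ∧ Avoids312 τ ∧ revSum m τ = π := by
  have htail (j : Fin t) : m ≤ (π (Fin.natAdd m j)).val := by
    have := apply_zero_lt_apply hinv h4321 h312 (i := Fin.natAdd m j)
      (Fin.lt_def.2 (by simp only [Fin.val_natAdd]; omega))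
    omega
  let f (j : Fin t) : Fin t :=
    ⟨(π (Fin.natAdd m j)).val - m, by have := (π (Fin.natAdd m j)).isLt; have := j.isLt; omega⟩
  have hf : Function.Semiconj (Fin.natAdd m) f π := fun j => by
    ext; simp only [Fin.val_natAdd, f]; have := htail j; omega
  have hfinv : Function.Involutive f := fun j =>
    Fin.natAdd_injective t m (by rw [hf.eq, hf.eq, hinv])
  refine ⟨hfinv.toPerm, hfinv, Avoids4321.of_semiconj (Fin.strictMono_natAdd m) hf h4321,
    Avoids312.of_semiconj (Fin.strictMono_natAdd m) hf h312, Equiv.ext fun i => ?_⟩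
  induction i using Fin.addCases with
  | left j =>
    ext
    have := apply_of_le_apply_zero hinv h4321 h312 (i := Fin.castAdd t j)
      (Fin.le_def.2 (by simp only [Fin.val_castAdd]; omega))
    simp only [revSum_castAdd, Fin.val_castAdd, Fin.val_rev] at this ⊢
    omega
  | right j => simp [hf.eq]

instance (n : ℕ) (π : Perm (Fin n)) :
    Decidable (Function.Involutive ⇑π ∧ Avoids4321 π ∧ Avoids312 π) := by
  unfold Function.Involutive Avoids4321 Avoids312; infer_instance

theorem count_zero : count4321x312 0 = 1 := by
  rw [count4321x312, Nat.card_eq_fintype_card]; decide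

theorem count_one : count4321x312 1 = 1 := by
  rw [count4321x312, Nat.card_eq_fintype_card]; decide

theorem count_two : count4321x312 2 = 2 := by
  rw [count4321x312, Nat.card_eq_fintype_card]; decide

theorem card_apply_zero_eq {m t N : ℕ} [NeZero N] (h : m + t = N) (hm : 1 ≤ m) (hm3 : m ≤ 3) :
    Nat.card {π : GoodInvolution N // (π.1 0).val = m - 1} = count4321x312 t := by
  subst h
  let e (τ : GoodInvolution t) : {π : GoodInvolution (m + t) // (π.1 0).val = m - 1} :=
    ⟨⟨revSum m τ.1, revSum_involutive τ.2.1, avoids4321_revSum hm3 τ.2.2.1,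
      avoids312_revSum τ.2.2.2⟩, revSum_apply_zero hm⟩
  refine (Nat.card_congr (Equiv.ofBijective e ⟨fun τ σ h => ?_, fun ⟨⟨π, hπ⟩, h0⟩ => ?_⟩)).symm
  · exact Subtype.ext (revSum_injective congr(($h).1.1))
  · obtain ⟨τ, hinv, h4321, h312, rfl⟩ := exists_revSum_eq hπ.1 hπ.2.1 hπ.2.2 h0 hm
    exact ⟨⟨τ, hinv, h4321, h312⟩, rfl⟩

theorem count_add_three (n : ℕ) :
    count4321x312 (n + 3) = count4321x312 (n + 2) + count4321x312 (n + 1) + count4321x312 n := by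
  let firstValue (π : GoodInvolution (n + 3)) : Fin 3 :=
    ⟨(π.1 0).val, Nat.lt_succ_of_le (apply_zero_le_two π.2.1 π.2.2.1 π.2.2.2)⟩
  have hfiber (k : Fin 3) :
      Nat.card {π // firstValue π = k} = count4321x312 (n + 2 - k) :=
    (Nat.card_congr (Equiv.subtypeEquivRight fun π => by simp [firstValue, Fin.ext_iff])).trans
      (card_apply_zero_eq (m := k + 1) (by omega) (by omega) (by omega))
  rw [count4321x312, ← Nat.card_congr (Equiv.sigmaFiberEquiv firstValue), Nat.card_sigma,
    Fin.sum_univ_three, hfiber, hfiber, hfiber]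
  rfl

theorem count_three : count4321x312 3 = 4 := by
  simpa [count_zero, count_one, count_two] using count_add_three 0

end GoodInvolution

open PowerSeries in
theorem PowerSeries.tribonacci_mul_mk {R : Type*} [CommRing R] {c : ℕ → R}
    (hc : ∀ n, c (n + 3) = c (n + 2) + c (n + 1) + c n) :
    (1 - X - X ^ 2 - X ^ 3) * mk c = C (c 0) + C (c 1 - c 0) * X + C (c 2 - c 1 - c 0) * X ^ 2 := by
  ext (_ | _ | _ | n)
  all_goals simp [sub_mul, coeff_X_pow_mul', coeff_X_pow, hc]
  abel

/-- The involutions avoiding 4321 and 312 are counted by the Tribonacci-like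
sequence `1, 2, 4, 7, 13, 24, 44, 81, …`, with generating function
`(x + x² + x³)/(1 − x − x² − x³)`. -/
theorem stmt13 :
    count4321x312 1 = 1 ∧ count4321x312 2 = 2 ∧ count4321x312 3 = 4 ∧
    (∀ n : ℕ, 4 ≤ n →
      count4321x312 n
        = count4321x312 (n - 1) + count4321x312 (n - 2) + count4321x312 (n - 3)) ∧
    (1 - PowerSeries.X - PowerSeries.X ^ 2 - PowerSeries.X ^ 3) *
        (PowerSeries.mk fun n => if n = 0 then (0 : ℚ) else (count4321x312 n : ℚ))
      = PowerSeries.X + PowerSeries.X ^ 2 + PowerSeries.X ^ 3 := by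
  open GoodInvolution PowerSeries in
  have hgf : (1 - X - X ^ 2 - X ^ 3) * PowerSeries.mk (fun n => (count4321x312 n : ℚ)) = 1 := by
    rw [tribonacci_mul_mk fun n => by exact_mod_cast count_add_three n]
    norm_num [count_zero, count_one, count_two]
  have hshift : (PowerSeries.mk fun n => if n = 0 then (0 : ℚ) else (count4321x312 n : ℚ))
      = PowerSeries.mk (fun n => (count4321x312 n : ℚ)) - 1 := by
    ext (_ | n) <;> simp [count_zero]
  refine ⟨count_one, count_two, count_three, fun n hn => ?_, ?_⟩
  · obtain ⟨k, rfl⟩ := Nat.exists_eq_add_of_le' hn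
    exact count_add_three (k + 1)
  · rw [hshift, mul_sub, hgf]
    ring
end

section
/- There are no simple involutions of length greater than 2 avoiding both 4321 and 312; in particular, in any simple permutation of length at least 4, the value 1 is not a fixed point, and any simple involution of length ≥ 4 contains a subsequence order-isomorphic to 312 of the form M, 1, m with M > m an excedance-deficiency pair. -/
open Equiv Finset

/-!
A simple permutation of length at least 3 cannot fix its first entry, since then the positions
`1, …, n - 1` would form an interval. For a simple involution `π` of length at least 4, let
`b = π 0`, so `π b = 0`. If no arc `a ↦ π a` with `0 < a` jumped over `b`, the involution `π`
would map `[0, b]` into itself, forcing `b = n - 1`; then `π` swaps the two ends and preserves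
`[1, n - 2]`, again contradicting simplicity. Such an arc `a < b < π a` gives the 312-pattern
`π a, 0, a` at positions `a, b, π a`. Length 3 is settled directly: some two adjacent entries
of a permutation of `{0, 1, 2}` have adjacent values.
-/

section

variable {n : ℕ} {π : Perm (Fin n)}

theorem isIntervalImage_of_mapsTo {a b c d : Fin n}
    (h : Set.MapsTo π (Set.Icc a b) (Set.Icc c d))
    (h' : Set.MapsTo π.symm (Set.Icc c d) (Set.Icc a b)) : IsIntervalImage π a b := by
  intro i j k hai hib haj hjb hik hkj
  have hk : k ∈ Set.Icc c d := ⟨(h ⟨hai, hib⟩).1.trans hik, hkj.trans (h ⟨haj, hjb⟩).2⟩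
  exact ⟨π.symm k, (h' hk).1, (h' hk).2, π.apply_symm_apply k⟩

theorem isIntervalImage_of_involutive_mapsTo (hπ : Function.Involutive π) {a b : Fin n}
    (h : Set.MapsTo π (Set.Icc a b) (Set.Icc a b)) : IsIntervalImage π a b :=
  isIntervalImage_of_mapsTo h (by rwa [Function.Involutive.symm_eq_self_of_involutive π hπ])

theorem isIntervalImage_of_val_succ {a b : Fin n} (hab : a.val + 1 = b.val)
    (hval : (π a).val + 1 = (π b).val ∨ (π b).val + 1 = (π a).val) : IsIntervalImage π a b := by
  intro i j k hai hib haj hjb hik hkj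
  have hi : i = a ∨ i = b := by omega
  have hj : j = a ∨ j = b := by omega
  have hk : k = π a ∨ k = π b := by
    rcases hi with rfl | rfl <;> rcases hj with rfl | rfl <;> omega
  rcases hk with rfl | rfl
  · exact ⟨a, le_rfl, by omega, rfl⟩
  · exact ⟨b, by omega, le_rfl, rfl⟩

theorem not_isSimplePerm_fin_three (σ : Perm (Fin 3)) : ¬ IsSimplePerm σ := by
  intro hs
  have h01 : σ 0 ≠ σ 1 := σ.injective.ne (by decide)
  have h02 : σ 0 ≠ σ 2 := σ.injective.ne (by decide)
  have h12 : σ 1 ≠ σ 2 := σ.injective.ne (by decide)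
  by_cases hadj : (σ 0).val + 1 = (σ 1).val ∨ (σ 1).val + 1 = (σ 0).val
  · have := (hs 0 1 (by decide) (isIntervalImage_of_val_succ rfl hadj)).2
    simp at this
  · have hadj' : (σ 1).val + 1 = (σ 2).val ∨ (σ 2).val + 1 = (σ 1).val := by omega
    have := (hs 1 2 (by decide) (isIntervalImage_of_val_succ rfl hadj')).1
    simp at this

theorem IsSimplePerm.apply_ne_self_of_val_eq_zero (hs : IsSimplePerm π) (hn : 2 < n)
    {z : Fin n} (hz : z.val = 0) : π z ≠ z := by
  intro hπz
  have hmaps : ∀ σ : Perm (Fin n), σ z = z →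
      Set.MapsTo σ (Set.Icc ⟨1, by omega⟩ ⟨n - 1, by omega⟩)
        (Set.Icc ⟨1, by omega⟩ ⟨n - 1, by omega⟩) := by
    intro σ hσ i hi
    simp only [Set.mem_Icc, Fin.le_def] at hi ⊢
    have : σ i ≠ σ z := σ.injective.ne (by omega)
    rw [hσ] at this
    omega
  have hinterval := isIntervalImage_of_mapsTo (hmaps π hπz)
    (hmaps π.symm (π.symm_apply_eq.mpr hπz.symm))
  have := (hs _ _ (by simp only [Fin.mk_lt_mk]; omega) hinterval).1
  simp at this

theorem IsSimplePerm.exists_lt_apply_lt (hs : IsSimplePerm π) (hπ : Function.Involutive π)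
    (hn : 3 < n) {z : Fin n} (hz : z.val = 0) : ∃ a : Fin n, 0 < a.val ∧ a < π z ∧ π z < π a := by
  set b := π z
  have hbz : π b = z := hπ z
  have hzb : z < b := by
    have := hs.apply_ne_self_of_val_eq_zero (by omega) hz
    omega
  by_contra! hnone
  have hb : b.val = n - 1 := by
    refine (hs z b hzb (isIntervalImage_of_involutive_mapsTo hπ fun i hi => ?_)).2
    simp only [Set.mem_Icc] at hi ⊢
    by_cases hi0 : i = z
    · subst hi0; omega
    by_cases hib : i = b
    · subst hib; omega
    exact ⟨by omega, hnone i (by omega) (by omega)⟩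
  have hmaps : Set.MapsTo π (Set.Icc ⟨1, by omega⟩ ⟨n - 2, by omega⟩)
      (Set.Icc ⟨1, by omega⟩ ⟨n - 2, by omega⟩) := by
    intro i hi
    simp only [Set.mem_Icc, Fin.le_def] at hi ⊢
    have hiz : π i ≠ π b := π.injective.ne (by omega)
    have hib : π i ≠ π z := π.injective.ne (by omega)
    rw [hbz] at hiz
    omega
  have := (hs _ _ (by simp only [Fin.mk_lt_mk]; omega)
    (isIntervalImage_of_involutive_mapsTo hπ hmaps)).1
  simp at this

end

/-- There are no simple involutions of length `> 2` avoiding both 4321 and 312;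
in particular, in a simple permutation of length `≥ 4` the value 1 is not a fixed
point, and a simple involution of length `≥ 4` contains a 312-pattern of the form
`M, 1, m` coming from an excedance-deficiency pair (positions `a < b < π a` with
value 1 at `b`, value `M = π a` at `a`, value `m = a` at `π a`). -/
theorem stmt14 :
    (∀ (n : ℕ) (π : Equiv.Perm (Fin n)), 2 < n → Function.Involutive ⇑π →
      Avoids4321 π → Avoids312 π → ¬ IsSimplePerm π) ∧
    (∀ (n : ℕ) (hn : 4 ≤ n) (π : Equiv.Perm (Fin n)), IsSimplePerm π →
      π ⟨0, by omega⟩ ≠ ⟨0, by omega⟩) ∧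
    (∀ (n : ℕ) (π : Equiv.Perm (Fin n)), 4 ≤ n → Function.Involutive ⇑π →
      IsSimplePerm π →
      ∃ a b : Fin n, a < π a ∧ a < b ∧ b < π a ∧ (π b).val = 0 ∧ 0 < a.val) := by
  refine ⟨fun n π hn hπ _ h312 hs => ?_,
    fun n hn π hs => hs.apply_ne_self_of_val_eq_zero (by omega) rfl, fun n π hn hπ hs => ?_⟩
  · rcases (show n = 3 ∨ 3 < n by omega) with rfl | hn
    · exact not_isSimplePerm_fin_three π hs
    obtain ⟨a, ha0, hab, hba⟩ := hs.exists_lt_apply_lt hπ hn (z := ⟨0, by omega⟩) rfl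
    refine h312 ⟨a, _, π a, hab, hba, ?_⟩
    rw [hπ, hπ, Fin.lt_def]
    exact ⟨ha0, hab.trans hba⟩
  · obtain ⟨a, ha0, hab, hba⟩ := hs.exists_lt_apply_lt hπ (by omega) (z := ⟨0, by omega⟩) rfl
    exact ⟨a, _, hab.trans hba, hab, hba, by rw [hπ], ha0⟩
end

section
/- Let π be an irreducible (connected) involution of length n ≥ 2 avoiding 3412. Then π(1) = n and π(n) = 1, and the pattern of π restricted to positions 2,…,n−1 is an involution of length n−2 avoiding 3412; that is, π = n (π') 1 where π' is a 3412-avoiding involution of length n−2 shifted up by 1. -/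
/-!
In an involution a 3412 pattern is the same thing as two crossing arcs `p ↦ π p`, `i ↦ π i`
with `p < i < π p < π i`. Hence, in a 3412-avoiding involution, the arc from `0` to `π 0`
encloses every arc starting under it, so `{0, …, π 0}` is `π`-stable; connectedness forces
`π 0 = n - 1`. The remaining positions `1, …, n - 2` are then stable under `π`, and the
restriction inherits both involutivity and pattern avoidance.
-/

open Equiv Finset

theorem Avoids3412.not_crossing {n : ℕ} {π : Perm (Fin n)} (hav : Avoids3412 π)
    (hinv : Function.Involutive π) {p i : Fin n} (hpi : p < i) (hip : i < π p)
    (hcross : π p < π i) : False :=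
  hav ⟨p, i, π p, π i, hpi, hip, hcross, by rwa [hinv, hinv], by rwa [hinv], hcross⟩

theorem Avoids3412.apply_le_apply_zero {n : ℕ} {π : Perm (Fin n)} (hav : Avoids3412 π)
    (hinv : Function.Involutive π) (hn : 0 < n) {i : Fin n} (hi : i ≤ π ⟨0, hn⟩) :
    π i ≤ π ⟨0, hn⟩ := by
  rcases hi.lt_or_eq with hi | rfl
  · rcases (show (⟨0, hn⟩ : Fin n) ≤ i from Fin.le_def.2 (Nat.zero_le _)).lt_or_eq with hi0 | hi0
    · by_contra! hcross
      exact hav.not_crossing hinv hi0 hi hcross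
    · rw [← hi0]
  · rw [hinv]
    exact Fin.le_def.2 (Nat.zero_le _)

theorem Avoids3412.apply_zero_eq_last {n : ℕ} {π : Perm (Fin n)} (hav : Avoids3412 π)
    (hinv : Function.Involutive π) (hconn : IsConnectedPerm π) (hn : 0 < n) :
    (π ⟨0, hn⟩).val = n - 1 := by
  by_contra hne
  refine hconn ⟨(π ⟨0, hn⟩).val + 1, Nat.succ_pos _, by omega, fun i hi => ?_⟩
  have := hav.apply_le_apply_zero hinv hn (i := i) (Fin.le_def.2 (by omega))
  rw [Fin.le_def] at this
  omega

theorem Avoids3412.of_orderEmbedding {m n : ℕ} {π : Perm (Fin n)} {σ : Perm (Fin m)}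
    (e : Fin m ↪o Fin n) (he : ∀ i, π (e i) = e (σ i)) (hav : Avoids3412 π) :
    Avoids3412 σ := by
  rintro ⟨a, b, c, d, hab, hbc, hcd, hcd', hda, hab'⟩
  refine hav ⟨e a, e b, e c, e d, e.lt_iff_lt.2 hab, e.lt_iff_lt.2 hbc, e.lt_iff_lt.2 hcd, ?_, ?_, ?_⟩
  all_goals simp only [he, e.lt_iff_lt]; assumption

theorem Function.Involutive.exists_restrict {α β : Type*} {π : Perm β}
    (hinv : Function.Involutive π) {e : α → β} (he : Function.Injective e)
    (hstable : ∀ a, ∃ b, π (e a) = e b) :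
    ∃ σ : Perm α, Function.Involutive σ ∧ ∀ a, π (e a) = e (σ a) := by
  choose f hf using hstable
  have hff : Function.Involutive f := fun a => he <| by rw [← hf, ← hf, hinv]
  exact ⟨hff.toPerm f, hff, hf⟩

def innerPositions (n : ℕ) : Fin (n - 2) ↪o Fin n :=
  OrderEmbedding.ofStrictMono (fun i => ⟨i.val + 1, by omega⟩) fun _ _ h => Nat.succ_lt_succ h

@[simp]
theorem innerPositions_apply_val {n : ℕ} (i : Fin (n - 2)) :
    (innerPositions n i).val = i.val + 1 :=
  rfl

theorem exists_innerPositions_eq {n : ℕ} {x : Fin n} (h0 : x.val ≠ 0) (hl : x.val ≠ n - 1) :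
    ∃ j, innerPositions n j = x :=
  ⟨⟨x.val - 1, by omega⟩, Fin.ext (by simp only [innerPositions_apply_val]; omega)⟩

/-- An irreducible (connected) 3412-avoiding involution of length `n ≥ 2` has
`π(1) = n` and `π(n) = 1`, and its restriction to positions `2, …, n−1` is (after
shifting by one) a 3412-avoiding involution of length `n − 2`. -/
theorem stmt16 (n : ℕ) (hn : 2 ≤ n) (π : Equiv.Perm (Fin n))
    (hinv : Function.Involutive ⇑π) (hav : Avoids3412 π)
    (hconn : IsConnectedPerm π) :
    π ⟨0, by omega⟩ = ⟨n - 1, by omega⟩ ∧ π ⟨n - 1, by omega⟩ = ⟨0, by omega⟩ ∧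
    ∃ π' : Equiv.Perm (Fin (n - 2)), Function.Involutive ⇑π' ∧ Avoids3412 π' ∧
      ∀ i : Fin (n - 2),
        (π ⟨i.val + 1, by have := i.isLt; omega⟩).val = (π' i).val + 1 := by
  have hfirst : π ⟨0, by omega⟩ = ⟨n - 1, by omega⟩ :=
    Fin.ext (hav.apply_zero_eq_last hinv hconn _)
  have hlast : π ⟨n - 1, by omega⟩ = ⟨0, by omega⟩ := by rw [← hfirst, hinv]
  have hstable : ∀ i, ∃ j, π (innerPositions n i) = innerPositions n j := by
    intro i
    have hi := i.isLt
    obtain ⟨j, hj⟩ := exists_innerPositions_eq (x := π (innerPositions n i))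
      (fun h => by
        have := congrArg Fin.val (π.injective ((Fin.ext h).trans hlast.symm))
        simp only [innerPositions_apply_val] at this
        omega)
      (fun h => by
        have := congrArg Fin.val (π.injective ((Fin.ext h).trans hfirst.symm))
        simp only [innerPositions_apply_val] at this
        omega)
    exact ⟨j, hj.symm⟩
  obtain ⟨σ, hσ, hπσ⟩ := hinv.exists_restrict (innerPositions n).injective hstable
  exact ⟨hfirst, hlast, σ, hσ, hav.of_orderEmbedding _ hπσ,
    fun i => congrArg Fin.val (hπσ i)⟩
end

section
/- The number of involutions of length n avoiding both 3412 and 132 is the Fibonacci number F_{n+1} (with F₁=F₂=1), i.e., the generating function is f(x) = x(1+x)/(1−x−x²), giving the sequence 1, 2, 3, 5, 8, 13, …. -/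
open Equiv Finset

/-- Number of involutions of length `n` avoiding 3412 and 132. -/
noncomputable def count3412x132 (n : ℕ) : ℕ :=
  Nat.card {π : Equiv.Perm (Fin n) // Function.Involutive ⇑π ∧ Avoids3412 π ∧
    Avoids132 π}

/-!
If an involution `σ` of length `n + 2` avoiding 3412 and 132 sent the last point to some `k`
strictly inside, then `j = σ 0` would give the occurrence `(j, k, last)` of 132 when `j < k` and
the occurrence `(0, k, j, last)` of 3412 when `k < j`. So `σ` either fixes the last point or swaps
it with the first one. These extreme points lie in no occurrence of either pattern, so removing
them is a bijection onto the involutions of length `n + 1`, resp. `n`, avoiding both patterns, and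
the counts satisfy the Fibonacci recursion from the initial values `1, 1`.
-/

open Function

namespace Equiv.Perm

variable {α β : Type*}

open Classical in
noncomputable def extendAlong (e : α ↪ β) :
    Perm α ≃ {σ : Perm β // ∀ x, x ∉ Set.range e → σ x = x} :=
  (Equiv.ofInjective e e.injective).permCongr.trans
    (Perm.subtypeEquivSubtypePerm (· ∈ Set.range e))

theorem semiconj_extendAlong (e : α ↪ β) (π : Perm α) : Semiconj e π (extendAlong e π).1 := by
  classical
  intro a
  rw [extendAlong, trans_apply, subtypeEquivSubtypePerm_apply_of_mem _ ⟨a, rfl⟩]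
  simp

theorem involutive_iff_of_semiconj {e : α ↪ β} {σ : Perm β} {π : Perm α}
    (hσ : Semiconj e π σ) (hout : ∀ x, x ∉ Set.range e → σ (σ x) = x) :
    Involutive σ ↔ Involutive π := by
  refine ⟨fun h a => e.injective ?_, fun h x => ?_⟩
  · rw [hσ.eq, hσ.eq, h]
  · by_cases hx : x ∈ Set.range e
    · obtain ⟨a, rfl⟩ := hx
      rw [← hσ.eq, ← hσ.eq, h]
    · exact hout x hx

end Equiv.Perm

theorem PowerSeries.one_sub_X_sub_X_sq_mul_mk {R : Type*} [CommRing R] {a : ℕ → R}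
    (ha : ∀ n, a (n + 2) = a (n + 1) + a n) :
    (1 - X - X ^ 2) * mk a = C (a 0) + C (a 1 - a 0) * X := by
  ext (_ | _ | n)
  · simp
  · simp [sub_mul, coeff_X_pow_mul']
  · simp [sub_mul, coeff_X_pow_mul', ha]

section Patterns

variable {m n : ℕ}

def Occurs132 (σ : Perm (Fin n)) (a b c : Fin n) : Prop :=
  a < b ∧ b < c ∧ σ a < σ c ∧ σ c < σ b

def Occurs3412 (σ : Perm (Fin n)) (a b c d : Fin n) : Prop :=
  a < b ∧ b < c ∧ c < d ∧ σ c < σ d ∧ σ d < σ a ∧ σ a < σ b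

def IsAvoidingInvolution (σ : Perm (Fin n)) : Prop :=
  Involutive σ ∧ Avoids3412 σ ∧ Avoids132 σ

variable {e : Fin m ↪o Fin n} {σ : Perm (Fin n)} {π : Perm (Fin m)}

theorem occurs132_iff_of_semiconj (hσ : Semiconj e π σ) {a b c : Fin m} :
    Occurs132 σ (e a) (e b) (e c) ↔ Occurs132 π a b c := by
  simp only [Occurs132, ← hσ.eq, e.lt_iff_lt]

theorem occurs3412_iff_of_semiconj (hσ : Semiconj e π σ) {a b c d : Fin m} :
    Occurs3412 σ (e a) (e b) (e c) (e d) ↔ Occurs3412 π a b c d := by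
  simp only [Occurs3412, ← hσ.eq, e.lt_iff_lt]

theorem avoids132_iff_of_semiconj (hσ : Semiconj e π σ)
    (hocc : ∀ a b c, Occurs132 σ a b c → a ∈ Set.range e ∧ b ∈ Set.range e ∧ c ∈ Set.range e) :
    Avoids132 σ ↔ Avoids132 π := by
  refine ⟨fun h ⟨a, b, c, habc⟩ => h ⟨e a, e b, e c, (occurs132_iff_of_semiconj hσ).2 habc⟩,
    fun h ⟨a, b, c, habc⟩ => ?_⟩
  obtain ⟨⟨a, rfl⟩, ⟨b, rfl⟩, ⟨c, rfl⟩⟩ := hocc a b c habc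
  exact h ⟨a, b, c, (occurs132_iff_of_semiconj hσ).1 habc⟩

theorem avoids3412_iff_of_semiconj (hσ : Semiconj e π σ)
    (hocc : ∀ a b c d, Occurs3412 σ a b c d →
      a ∈ Set.range e ∧ b ∈ Set.range e ∧ c ∈ Set.range e ∧ d ∈ Set.range e) :
    Avoids3412 σ ↔ Avoids3412 π := by
  refine ⟨fun h ⟨a, b, c, d, habcd⟩ =>
      h ⟨e a, e b, e c, e d, (occurs3412_iff_of_semiconj hσ).2 habcd⟩,
    fun h ⟨a, b, c, d, habcd⟩ => ?_⟩
  obtain ⟨⟨a, rfl⟩, ⟨b, rfl⟩, ⟨c, rfl⟩, ⟨d, rfl⟩⟩ := hocc a b c d habcd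
  exact h ⟨a, b, c, d, (occurs3412_iff_of_semiconj hσ).1 habcd⟩

theorem isAvoidingInvolution_iff_of_semiconj (hσ : Semiconj e π σ)
    (hout : ∀ x, x ∉ Set.range e → σ (σ x) = x)
    (h3412 : ∀ a b c d, Occurs3412 σ a b c d →
      a ∈ Set.range e ∧ b ∈ Set.range e ∧ c ∈ Set.range e ∧ d ∈ Set.range e)
    (h132 : ∀ a b c, Occurs132 σ a b c →
      a ∈ Set.range e ∧ b ∈ Set.range e ∧ c ∈ Set.range e) :
    IsAvoidingInvolution σ ↔ IsAvoidingInvolution π :=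
  and_congr (Perm.involutive_iff_of_semiconj (e := e.toEmbedding) hσ hout)
    (and_congr (avoids3412_iff_of_semiconj hσ h3412) (avoids132_iff_of_semiconj hσ h132))

end Patterns

section Recursion

variable {n : ℕ}

noncomputable def extendFixLast (π : Perm (Fin n)) : Perm (Fin (n + 1)) :=
  (Perm.extendAlong Fin.castSuccOrderEmb.toEmbedding π).1

theorem semiconj_extendFixLast (π : Perm (Fin n)) :
    Semiconj Fin.castSuccOrderEmb π (extendFixLast π) :=
  Perm.semiconj_extendAlong _ π

theorem eq_last_of_notMem_range_castSucc {x : Fin (n + 1)}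
    (hx : x ∉ Set.range Fin.castSuccOrderEmb) : x = Fin.last n :=
  not_not.1 (mt Fin.exists_castSucc_eq.2 hx)

theorem extendFixLast_last (π : Perm (Fin n)) : extendFixLast π (Fin.last n) = Fin.last n :=
  (Perm.extendAlong _ π).2 _ fun ⟨i, hi⟩ => Fin.castSucc_ne_last i hi

theorem extendFixLast_injective : Injective (extendFixLast (n := n)) :=
  fun _ _ h => (Perm.extendAlong _).injective (Subtype.ext h)

theorem exists_extendFixLast_eq {σ : Perm (Fin (n + 1))} (h : σ (Fin.last n) = Fin.last n) :
    ∃ π, extendFixLast π = σ := by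
  obtain ⟨π, hπ⟩ := (Perm.extendAlong Fin.castSuccOrderEmb.toEmbedding).surjective
    ⟨σ, fun x hx => by rwa [eq_last_of_notMem_range_castSucc hx]⟩
  exact ⟨π, congrArg Subtype.val hπ⟩

theorem isAvoidingInvolution_extendFixLast_iff {π : Perm (Fin n)} :
    IsAvoidingInvolution (extendFixLast π) ↔ IsAvoidingInvolution π := by
  set σ := extendFixLast π
  have hlast : σ (Fin.last n) = Fin.last n := extendFixLast_last π
  have hrange : ∀ x, x < Fin.last n → x ∈ Set.range Fin.castSuccOrderEmb :=
    fun x hx => Fin.exists_castSucc_eq.2 hx.ne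
  have hlt : ∀ x y, σ x < σ y → x < Fin.last n := fun x y h =>
    lt_of_le_of_ne (Fin.le_last x) fun hx => by
      rw [hx, hlast] at h; exact (Fin.le_last _).not_gt h
  refine isAvoidingInvolution_iff_of_semiconj (semiconj_extendFixLast π) (fun x hx => ?_) ?_ ?_
  · rw [eq_last_of_notMem_range_castSucc hx, hlast, hlast]
  · rintro a b c d ⟨hab, hbc, hcd, -, hda, -⟩
    have hd := hlt d a hda
    exact ⟨hrange a (by order), hrange b (by order), hrange c (by order), hrange d hd⟩
  · rintro a b c ⟨hab, hbc, -, hcb⟩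
    have hc := hlt c b hcb
    exact ⟨hrange a (by order), hrange b (by order), hrange c hc⟩

def innerEmb (n : ℕ) : Fin n ↪o Fin (n + 2) :=
  Fin.castSuccOrderEmb.trans (Fin.succOrderEmb (n + 1))

theorem mem_range_innerEmb {x : Fin (n + 2)} :
    x ∈ Set.range (innerEmb n) ↔ x ≠ 0 ∧ x ≠ Fin.last (n + 1) := by
  refine ⟨?_, fun ⟨h0, hl⟩ => ?_⟩
  · rintro ⟨i, rfl⟩
    exact ⟨Fin.succ_ne_zero _, (Fin.succ_lt_succ_iff.2 (Fin.castSucc_lt_last i)).ne⟩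
  obtain ⟨y, rfl⟩ := Fin.exists_succ_eq.2 h0
  obtain ⟨i, rfl⟩ :=
    Fin.exists_castSucc_eq.2 fun h : y = Fin.last n => hl (by rw [h, Fin.succ_last])
  exact ⟨i, rfl⟩

theorem eq_zero_or_eq_last_of_notMem_range_innerEmb {x : Fin (n + 2)}
    (hx : x ∉ Set.range (innerEmb n)) : x = 0 ∨ x = Fin.last (n + 1) := by
  rwa [mem_range_innerEmb, not_and_or, not_not, not_not] at hx

noncomputable def extendSwapEnds (π : Perm (Fin n)) : Perm (Fin (n + 2)) :=
  swap 0 (Fin.last (n + 1)) * (Perm.extendAlong (innerEmb n).toEmbedding π).1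

theorem semiconj_extendSwapEnds (π : Perm (Fin n)) :
    Semiconj (innerEmb n) π (extendSwapEnds π) := fun i => by
  rw [extendSwapEnds, Perm.mul_apply]
  obtain ⟨h0, hl⟩ := mem_range_innerEmb.1 ⟨π i, rfl⟩
  exact (swap_apply_of_ne_of_ne h0 hl).symm.trans
    (congrArg _ (Perm.semiconj_extendAlong (innerEmb n).toEmbedding π i))

theorem extendSwapEnds_zero (π : Perm (Fin n)) : extendSwapEnds π 0 = Fin.last (n + 1) := by
  rw [extendSwapEnds, Perm.mul_apply,
    (Perm.extendAlong _ π).2 0 fun h => (mem_range_innerEmb.1 h).1 rfl, swap_apply_left]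

theorem extendSwapEnds_last (π : Perm (Fin n)) : extendSwapEnds π (Fin.last (n + 1)) = 0 := by
  rw [extendSwapEnds, Perm.mul_apply,
    (Perm.extendAlong _ π).2 _ fun h => (mem_range_innerEmb.1 h).2 rfl, swap_apply_right]

theorem extendSwapEnds_injective : Injective (extendSwapEnds (n := n)) :=
  fun _ _ h => (Perm.extendAlong _).injective (Subtype.ext (mul_left_cancel h))

theorem exists_extendSwapEnds_eq {σ : Perm (Fin (n + 2))} (h0 : σ 0 = Fin.last (n + 1))
    (hl : σ (Fin.last (n + 1)) = 0) : ∃ π, extendSwapEnds π = σ := by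
  obtain ⟨π, hπ⟩ := (Perm.extendAlong (innerEmb n).toEmbedding).surjective
    ⟨swap 0 (Fin.last (n + 1)) * σ, fun x hx => by
      rcases eq_zero_or_eq_last_of_notMem_range_innerEmb hx with rfl | rfl
      · rw [Perm.mul_apply, h0, swap_apply_right]
      · rw [Perm.mul_apply, hl, swap_apply_left]⟩
  refine ⟨π, ?_⟩
  rw [extendSwapEnds, hπ, swap_mul_self_mul]

theorem isAvoidingInvolution_extendSwapEnds_iff {π : Perm (Fin n)} :
    IsAvoidingInvolution (extendSwapEnds π) ↔ IsAvoidingInvolution π := by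
  set σ := extendSwapEnds π
  have hzero : σ 0 = Fin.last (n + 1) := extendSwapEnds_zero π
  have hlast : σ (Fin.last (n + 1)) = 0 := extendSwapEnds_last π
  have hpos : ∀ x y, σ x < σ y → 0 < x := fun x y h =>
    Fin.pos_of_ne_zero fun hx => by rw [hx, hzero] at h; exact (Fin.le_last _).not_gt h
  have hlt : ∀ x y, σ y < σ x → x < Fin.last (n + 1) := fun x y h =>
    lt_of_le_of_ne (Fin.le_last x) fun hx => by rw [hx, hlast] at h; exact Fin.not_lt_zero _ h
  have hrange : ∀ x, 0 < x → x < Fin.last (n + 1) → x ∈ Set.range (innerEmb n) :=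
    fun x h0 hl => mem_range_innerEmb.2 ⟨h0.ne', hl.ne⟩
  refine isAvoidingInvolution_iff_of_semiconj (semiconj_extendSwapEnds π) (fun x hx => ?_) ?_ ?_
  · rcases eq_zero_or_eq_last_of_notMem_range_innerEmb hx with rfl | rfl
    · rw [hzero, hlast]
    · rw [hlast, hzero]
  · rintro a b c d ⟨hab, hbc, hcd, hcd', -, hab'⟩
    have ha := hpos a b hab'
    have hd := hlt d c hcd'
    exact ⟨hrange a ha (by order), hrange b (by order) (by order),
      hrange c (by order) (by order), hrange d (by order) hd⟩
  · rintro a b c ⟨hab, hbc, hac, -⟩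
    have ha := hpos a c hac
    have hc := hlt c a hac
    exact ⟨hrange a ha (by order), hrange b (by order) (by order), hrange c (by order) hc⟩

theorem extendFixLast_ne_extendSwapEnds (π : Perm (Fin (n + 1))) (π' : Perm (Fin n)) :
    extendFixLast π ≠ extendSwapEnds π' := fun h => by
  have := congrArg (· (Fin.last (n + 1))) h
  simp only [extendFixLast_last, extendSwapEnds_last] at this
  exact Fin.last_pos.ne' this

theorem IsAvoidingInvolution.apply_last_eq_last_or_zero {σ : Perm (Fin (n + 2))}
    (hσ : IsAvoidingInvolution σ) :
    σ (Fin.last (n + 1)) = Fin.last (n + 1) ∨ σ (Fin.last (n + 1)) = 0 := by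
  obtain ⟨hinv, h3412, h132⟩ := hσ
  by_contra! hk
  set L := Fin.last (n + 1)
  set k := σ L
  have hkL : k < L := lt_of_le_of_ne (Fin.le_last k) hk.1
  have hk0 : 0 < k := Fin.pos_of_ne_zero hk.2
  have hσk : σ k = L := hinv L
  set j := σ 0
  have hσj : σ j = 0 := hinv 0
  rcases lt_trichotomy j k with hjk | hjk | hkj
  · exact h132 ⟨j, k, L, hjk, hkL, by rwa [hσj], by rwa [hσk]⟩
  · rw [hjk, hσk] at hσj
    exact Fin.last_pos.ne' hσj
  · have hjL : j < L := lt_of_le_of_ne (Fin.le_last j) fun h => hk.2 (by rw [← hσj, h])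
    exact h3412 ⟨0, k, j, L, hk0, hkj, hjL, by rwa [hσj], hkj, by rwa [hσk]⟩

end Recursion

theorem count3412x132_add_two (n : ℕ) :
    count3412x132 (n + 2) = count3412x132 (n + 1) + count3412x132 n := by
  let f : {π : Perm (Fin (n + 1)) // IsAvoidingInvolution π} ⊕
      {π : Perm (Fin n) // IsAvoidingInvolution π} →
      {σ : Perm (Fin (n + 2)) // IsAvoidingInvolution σ} :=
    Sum.elim (fun π => ⟨extendFixLast π, isAvoidingInvolution_extendFixLast_iff.2 π.2⟩)
      (fun π => ⟨extendSwapEnds π, isAvoidingInvolution_extendSwapEnds_iff.2 π.2⟩)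
  have hf : Bijective f := by
    refine ⟨Injective.sumElim ?_ ?_ ?_, ?_⟩
    · exact .of_comp (f := Subtype.val) (extendFixLast_injective.comp Subtype.val_injective)
    · exact .of_comp (f := Subtype.val) (extendSwapEnds_injective.comp Subtype.val_injective)
    · exact fun π π' h => extendFixLast_ne_extendSwapEnds π.1 π'.1 (Subtype.ext_iff.1 h)
    · rintro ⟨σ, hσ⟩
      rcases hσ.apply_last_eq_last_or_zero with hl | hl
      · obtain ⟨π, rfl⟩ := exists_extendFixLast_eq hl
        exact ⟨.inl ⟨π, isAvoidingInvolution_extendFixLast_iff.1 hσ⟩, rfl⟩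
      · obtain ⟨π, rfl⟩ := exists_extendSwapEnds_eq (by rw [← hl, hσ.1]) hl
        exact ⟨.inr ⟨π, isAvoidingInvolution_extendSwapEnds_iff.1 hσ⟩, rfl⟩
  exact (Nat.card_eq_of_bijective f hf).symm.trans Nat.card_sum

theorem count3412x132_of_le_one {n : ℕ} (hn : n ≤ 1) : count3412x132 n = 1 := by
  have : Subsingleton (Fin n) := Fin.subsingleton_iff_le_one.2 hn
  have h1 : IsAvoidingInvolution (1 : Perm (Fin n)) :=
    ⟨fun _ => rfl, fun ⟨a, b, _, _, hab, _⟩ => hab.ne (Subsingleton.elim a b),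
      fun ⟨a, b, _, hab, _⟩ => hab.ne (Subsingleton.elim a b)⟩
  exact Nat.card_eq_one_iff_unique.2 ⟨inferInstance, ⟨⟨1, h1⟩⟩⟩

theorem count3412x132_eq_fib : ∀ n, count3412x132 n = Nat.fib (n + 1)
  | 0 | 1 => count3412x132_of_le_one (by decide)
  | n + 2 => by
    rw [count3412x132_add_two, count3412x132_eq_fib (n + 1), count3412x132_eq_fib n,
      Nat.fib_add_two (n := n + 1), add_comm]

/-- The involutions avoiding 3412 and 132 are counted by the Fibonacci numbers
`F_{n+1}` (with `F₁ = F₂ = 1`), with generating function `x(1+x)/(1−x−x²)`. -/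
theorem stmt18 :
    (∀ n : ℕ, 1 ≤ n → count3412x132 n = Nat.fib (n + 1)) ∧
    (1 - PowerSeries.X - PowerSeries.X ^ 2) *
        (PowerSeries.mk fun n => if n = 0 then (0 : ℚ) else (count3412x132 n : ℚ))
      = PowerSeries.X * (1 + PowerSeries.X) := by
  refine ⟨fun n _ => count3412x132_eq_fib n, ?_⟩
  have hshift : (PowerSeries.mk fun n => if n = 0 then (0 : ℚ) else (count3412x132 n : ℚ)) =
      PowerSeries.mk (fun n => (count3412x132 n : ℚ)) - 1 := by
    ext (_ | n) <;> simp [count3412x132_of_le_one]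
  rw [hshift, mul_sub, PowerSeries.one_sub_X_sub_X_sq_mul_mk fun n => by
    rw [count3412x132_add_two, Nat.cast_add],
    count3412x132_of_le_one zero_le_one, count3412x132_of_le_one le_rfl]
  simp only [Nat.cast_one, sub_self, map_one, map_zero]
  ring
end

section
/- The number of 3412-avoiding involutions of length n equals the number of 4321-avoiding involutions of length n, and both equal the n-th Motzkin number; moreover, the connected (irreducible) involutions in each class of length n+2 are also equinumerous, counted by the Motzkin number of index n (plus the correction for length 2), i.e., the generating function for irreducible involutions in either class is (f(x)+1)x² where f(x) = (1−x−√(1−2x−3x²))/(2x²) − 1. -/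
open Equiv Finset

/-- Number of Motzkin paths of length `n` (the Motzkin number `M_n`). -/
noncomputable def motzkinNum (n : ℕ) : ℕ :=
  Nat.card {l : List ℤ // IsMotzkinPath l ∧ l.length = n}

noncomputable def count3412 (n : ℕ) : ℕ :=
  Nat.card {π : Equiv.Perm (Fin n) // Function.Involutive ⇑π ∧ Avoids3412 π}

noncomputable def count4321 (n : ℕ) : ℕ :=
  Nat.card {π : Equiv.Perm (Fin n) // Function.Involutive ⇑π ∧ Avoids4321 π}

noncomputable def connCount3412 (n : ℕ) : ℕ :=
  Nat.card {π : Equiv.Perm (Fin n) // Function.Involutive ⇑π ∧ Avoids3412 π ∧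
    IsConnectedPerm π}

noncomputable def connCount4321 (n : ℕ) : ℕ :=
  Nat.card {π : Equiv.Perm (Fin n) // Function.Involutive ⇑π ∧ Avoids4321 π ∧
    IsConnectedPerm π}

/-!
Read an involution from left to right, writing an up step at each `i < π i`, a level step at each
fixed point and a down step at each `π i < i`: this gives a Motzkin path whose height after `k`
steps is the number of arcs open at `k`. Conversely the path determines the involution as soon as
one knows which up step each down step closes. A 3412-avoiding involution is noncrossing, so each
arc closes at the first return of the path to the level it started from; a 4321-avoiding
involution is nonnesting, so the `r`-th arc to open is the `r`-th to close. Each rule matches the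
up steps of any Motzkin path bijectively with its down steps, so both classes are in bijection
with Motzkin paths. An involution is connected exactly when some arc is open at every interior
point, i.e. when its path is irreducible, and deleting the first and last steps of an irreducible
path of length `n + 2` leaves an arbitrary Motzkin path of length `n`.
-/

namespace MotzkinInvolution

open Function

section Counting

variable {α : Type*} [Fintype α] [LinearOrder α] {p : α → Prop} [DecidablePred p]

theorem card_filter_lt_lt_of_lt {a b : α} (ha : p a) (hab : a < b) :
    #{x | x < a ∧ p x} < #{x | x < b ∧ p x} :=
  card_lt_card ⟨fun x hx => by
    simp only [mem_filter, mem_univ, true_and] at hx ⊢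
    exact ⟨hx.1.trans hab, hx.2⟩,
    fun hsub => by simpa using hsub (mem_filter.mpr ⟨mem_univ a, hab, ha⟩)⟩

theorem card_filter_lt_lt_card_filter {a : α} (ha : p a) : #{x | x < a ∧ p x} < #{x | p x} :=
  card_lt_card ⟨fun x hx => mem_filter.mpr ⟨mem_univ x, (mem_filter.mp hx).2.2⟩, fun hsub => by
    simpa using hsub (mem_filter.mpr ⟨mem_univ a, ha⟩)⟩

theorem exists_card_filter_lt_eq {r : ℕ} (hr : r < #{x | p x}) :
    ∃ a, p a ∧ #{x | x < a ∧ p x} = r := by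
  -- `a` is the `r`-th element of `{x | p x}` in increasing order
  set e := ({x | p x} : Finset α).orderIsoOfFin rfl
  refine ⟨e ⟨r, hr⟩, (mem_filter.mp (e ⟨r, hr⟩).2).2, ?_⟩
  refine Eq.trans ?_ (Fin.card_Iio (⟨r, hr⟩ : Fin _))
  symm
  refine card_bij (fun m _ => (e m : α)) (fun m hm => ?_) (fun m _ m' _ h => ?_) (fun x hx => ?_)
  · simp only [mem_Iio, mem_filter, mem_univ, true_and] at hm ⊢
    exact ⟨Subtype.coe_lt_coe.mpr (e.lt_iff_lt.mpr hm), (mem_filter.mp (e m).2).2⟩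
  · exact e.injective (Subtype.ext h)
  · simp only [mem_filter, mem_univ, true_and] at hx
    refine ⟨e.symm ⟨x, by simp [hx.2]⟩, ?_, by simp⟩
    rw [mem_Iio, ← e.lt_iff_lt, e.apply_symm_apply, ← Subtype.coe_lt_coe]
    exact hx.1

end Counting

variable {n : ℕ}

section Heights

variable {s : Fin n → ℤ}

def height (s : Fin n → ℤ) (k : ℕ) : ℤ := ∑ i : Fin n with i.val < k, s i

theorem height_eq_sum_take (s : Fin n → ℤ) (k : ℕ) : height s k = ((List.ofFn s).take k).sum :=
  (List.sum_take_ofFn s k).symm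

theorem height_succ (s : Fin n → ℤ) (i : Fin n) : height s (i + 1 : ℕ) = height s i + s i := by
  have : univ.filter (fun x : Fin n => x.val < i + 1) =
      insert i (univ.filter fun x : Fin n => x.val < i) := by
    ext x
    simp only [mem_filter, mem_univ, true_and, mem_insert, Fin.ext_iff]
    omega
  unfold height
  rw [this, sum_insert (by simp), add_comm]

theorem height_eq_card_sub_card (hs : ∀ i, s i = 1 ∨ s i = 0 ∨ s i = -1) (k : ℕ) :
    height s k = #{i : Fin n | i.val < k ∧ s i = 1} - #{i : Fin n | i.val < k ∧ s i = -1} := by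
  have hind : ∀ i, s i = (if s i = 1 then 1 else 0) - (if s i = -1 then 1 else 0) := by
    intro i
    rcases hs i with h | h | h <;> simp [h]
  rw [height, sum_congr rfl fun i _ => hind i, sum_sub_distrib, sum_boole, sum_boole,
    filter_filter, filter_filter]

theorem isMotzkinPath_iff {l : List ℤ} :
    IsMotzkinPath l ↔
      (∀ x ∈ l, x = 1 ∨ x = 0 ∨ x = -1) ∧ l.sum = 0 ∧ ∀ k, 0 ≤ (l.take k).sum := by
  refine and_congr_right fun _ => and_congr_right fun _ => ⟨fun h k => h _ (l.take_prefix k),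
    fun h p hp => ?_⟩
  rw [List.prefix_iff_eq_take.mp hp]
  exact h _

theorem isMotzkinPath_ofFn_iff :
    IsMotzkinPath (List.ofFn s) ↔
      (∀ i, s i = 1 ∨ s i = 0 ∨ s i = -1) ∧ height s n = 0 ∧ ∀ k, 0 ≤ height s k := by
  simp only [isMotzkinPath_iff, List.forall_mem_ofFn_iff, height_eq_sum_take]
  rw [List.take_of_length_le (by simp)]

theorem card_up_eq_card_down (hs : IsMotzkinPath (List.ofFn s)) :
    #{i | s i = 1} = #{i | s i = -1} := by
  obtain ⟨hstep, hend, -⟩ := isMotzkinPath_ofFn_iff.mp hs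
  have := height_eq_card_sub_card hstep n
  simp only [Fin.is_lt, true_and] at this
  omega

end Heights

def IsIrreduciblePath (l : List ℤ) : Prop :=
  ∀ k, 0 < k → k < l.length → (l.take k).sum ≠ 0

def elevate (m : List ℤ) : List ℤ := 1 :: (m ++ [-1])

section Elevation

variable {m : List ℤ}

theorem sum_take_succ_cons_append (a : ℤ) (t : List ℤ) {k : ℕ} (hk : k ≤ m.length) :
    ((a :: (m ++ t)).take (k + 1)).sum = a + (m.take k).sum := by
  simp [List.take_append_of_le_length hk]

theorem sum_take_elevate_pos (hm : IsMotzkinPath m) {k : ℕ} (hk : 0 < k) (hk' : k < m.length + 2) :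
    0 < ((elevate m).take k).sum := by
  obtain ⟨j, rfl⟩ : ∃ j, k = j + 1 := ⟨k - 1, by omega⟩
  rw [elevate, sum_take_succ_cons_append _ _ (by omega)]
  linarith [(isMotzkinPath_iff.mp hm).2.2 j]

theorem isMotzkinPath_elevate (hm : IsMotzkinPath m) : IsMotzkinPath (elevate m) := by
  obtain ⟨hstep, hsum, -⟩ := isMotzkinPath_iff.mp hm
  have hsum' : (elevate m).sum = 0 := by simp [elevate, hsum]
  refine isMotzkinPath_iff.mpr ⟨?_, hsum', fun k => ?_⟩
  · simp only [elevate, List.mem_cons, List.mem_append, List.not_mem_nil, or_false]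
    rintro x (rfl | hx | rfl)
    exacts [Or.inl rfl, hstep x hx, Or.inr (Or.inr rfl)]
  · rcases Nat.eq_zero_or_pos k with rfl | hk
    · simp
    rcases Nat.lt_or_ge k (m.length + 2) with hk' | hk'
    · exact (sum_take_elevate_pos hm hk hk').le
    · rw [List.take_of_length_le (by simp [elevate]; omega), hsum']

theorem isIrreduciblePath_elevate (hm : IsMotzkinPath m) : IsIrreduciblePath (elevate m) :=
  fun k hk hk' => (sum_take_elevate_pos hm hk (by simp [elevate] at hk'; omega)).ne'

theorem exists_eq_elevate {l : List ℤ} (hl : IsMotzkinPath l) (hirr : IsIrreduciblePath l)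
    (hlen : 2 ≤ l.length) : ∃ m, IsMotzkinPath m ∧ l = elevate m := by
  obtain ⟨hstep, hsum, hpre⟩ := isMotzkinPath_iff.mp hl
  obtain ⟨a, t, rfl⟩ :=
    List.exists_cons_of_ne_nil (List.ne_nil_of_length_pos (by omega : 0 < l.length))
  obtain ⟨m, b, rfl⟩ := (List.eq_nil_or_concat' t).resolve_left (by rintro rfl; simp at hlen)
  have hlen' : (a :: (m ++ [b])).length = m.length + 2 := by simp
  rw [IsIrreduciblePath, hlen'] at hirr
  have ha : a = 1 := by
    have h₁ := hpre 1
    have h₂ := hirr 1 one_pos (by omega)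
    rcases hstep a (by simp) with h | h | h <;> simp_all
  have hm (k : ℕ) (hk : k ≤ m.length) : 0 ≤ (m.take k).sum := by
    have h₁ := hpre (k + 1)
    have h₂ := hirr (k + 1) (by omega) (by omega)
    rw [sum_take_succ_cons_append _ _ hk, ha] at h₁ h₂
    omega
  have hb : b = -1 ∧ m.sum = 0 := by
    have h₁ := hm m.length le_rfl
    have h₂ := hirr (m.length + 1) (by omega) (by omega)
    rw [List.take_length] at h₁
    rw [sum_take_succ_cons_append _ _ le_rfl, List.take_length] at h₂
    simp only [List.sum_cons, List.sum_append, List.sum_nil] at hsum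
    rcases hstep b (by simp) with h | h | h <;> omega
  obtain ⟨rfl, hmsum⟩ := hb
  subst ha
  refine ⟨m, isMotzkinPath_iff.mpr ⟨fun x hx => hstep x (by simp [hx]), hmsum, fun k => ?_⟩, rfl⟩
  rcases le_or_gt k m.length with hk | hk
  · exact hm k hk
  · rw [List.take_of_length_le hk.le, hmsum]

theorem bijOn_elevate (n : ℕ) :
    Set.BijOn elevate {m | IsMotzkinPath m ∧ m.length = n}
      {l | IsMotzkinPath l ∧ l.length = n + 2 ∧ IsIrreduciblePath l} := by
  refine ⟨fun m ⟨hm, hlen⟩ => ⟨isMotzkinPath_elevate hm, by simp [elevate, hlen],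
    isIrreduciblePath_elevate hm⟩, fun m _ m' _ h => by simpa [elevate] using h, ?_⟩
  rintro l ⟨hl, hlen, hirr⟩
  obtain ⟨m, hm, rfl⟩ := exists_eq_elevate hl hirr (by omega)
  exact ⟨m, ⟨hm, by simpa [elevate] using hlen⟩, rfl⟩

theorem card_irreducible_eq_motzkinNum (n : ℕ) :
    Nat.card {l // IsMotzkinPath l ∧ l.length = n + 2 ∧ IsIrreduciblePath l} = motzkinNum n :=
  (Nat.card_congr ((bijOn_elevate n).equiv _)).symm

end Elevation

section InvStep

variable {π : Perm (Fin n)} {i : Fin n}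

theorem invStep_eq_one_iff : invStep π i = 1 ↔ i < π i := by
  unfold invStep
  split_ifs <;> simp_all

theorem invStep_eq_zero_iff : invStep π i = 0 ↔ π i = i := by
  unfold invStep
  split_ifs <;> simp_all

theorem invStep_eq_neg_one_iff : invStep π i = -1 ↔ π i < i := by
  unfold invStep
  split_ifs with h₁ h₂
  · simp [h₁]
  · simp [h₂.le]
  · simp [lt_of_le_of_ne (not_lt.mp h₂) h₁]

theorem invStep_cases (π : Perm (Fin n)) (i : Fin n) :
    invStep π i = 1 ∨ invStep π i = 0 ∨ invStep π i = -1 := by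
  unfold invStep
  split_ifs <;> simp

end InvStep

section ArcMatching

variable {s : Fin n → ℤ} {M : Fin n → Fin n → Prop}

structure IsArcMatching (s : Fin n → ℤ) (M : Fin n → Fin n → Prop) : Prop where
  lt : ∀ {i j}, M i j → i < j
  up : ∀ {i j}, M i j → s i = 1
  down : ∀ {i j}, M i j → s j = -1
  right_unique : ∀ {i j j'}, M i j → M i j' → j = j'
  left_unique : ∀ {i i' j}, M i j → M i' j → i = i'
  exists_right : ∀ {i}, s i = 1 → ∃ j, M i j

theorem IsArcMatching.exists_left (hs : IsMotzkinPath (List.ofFn s)) (hM : IsArcMatching s M)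
    {j : Fin n} (hj : s j = -1) : ∃ i, M i j := by
  -- Pigeonhole: `M` maps the up steps injectively to the down steps, which are equally many.
  choose! f hf using fun i (hi : s i = 1) => hM.exists_right hi
  obtain ⟨i, hi, rfl⟩ := surj_on_of_inj_on_of_card_le (fun i _ => f i)
    (fun i hi => by simpa using hM.down (hf i (by simpa using hi)))
    (fun a b ha hb h => hM.left_unique (hf a (by simpa using ha)) (h ▸ hf b (by simpa using hb)))
    (card_up_eq_card_down hs).ge j (by simpa using hj)
  exact ⟨i, hf i (by simpa using hi)⟩

open Classical in
noncomputable def partner (M : Fin n → Fin n → Prop) (i : Fin n) : Fin n :=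
  if h : ∃ j, M i j then h.choose else if h : ∃ j, M j i then h.choose else i

theorem partner_of_up (hM : IsArcMatching s M) {i : Fin n} (hi : s i = 1) :
    M i (partner M i) := by
  have h : ∃ j, M i j := hM.exists_right hi
  rw [partner, dif_pos h]
  exact h.choose_spec

theorem partner_of_down (hs : IsMotzkinPath (List.ofFn s)) (hM : IsArcMatching s M) {i : Fin n}
    (hi : s i = -1) : M (partner M i) i := by
  have hr : ¬ ∃ j, M i j := fun ⟨_, h⟩ => by simp [hM.up h] at hi
  have hl : ∃ j, M j i := hM.exists_left hs hi
  rw [partner, dif_neg hr, dif_pos hl]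
  exact hl.choose_spec

theorem partner_of_flat (hM : IsArcMatching s M) {i : Fin n} (hi : s i = 0) :
    partner M i = i := by
  have hr : ¬ ∃ j, M i j := fun ⟨_, h⟩ => by simp [hM.up h] at hi
  have hl : ¬ ∃ j, M j i := fun ⟨_, h⟩ => by simp [hM.down h] at hi
  rw [partner, dif_neg hr, dif_neg hl]

theorem partner_involutive (hs : IsMotzkinPath (List.ofFn s)) (hM : IsArcMatching s M) :
    Involutive (partner M) := by
  intro i
  rcases (isMotzkinPath_ofFn_iff.mp hs).1 i with hi | hi | hi
  · have h := partner_of_up hM hi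
    exact hM.left_unique (partner_of_down hs hM (hM.down h)) h
  · rw [partner_of_flat hM hi, partner_of_flat hM hi]
  · have h := partner_of_down hs hM hi
    exact hM.right_unique (partner_of_up hM (hM.up h)) h

theorem IsArcMatching.exists_perm (hs : IsMotzkinPath (List.ofFn s)) (hM : IsArcMatching s M) :
    ∃ π : Perm (Fin n), Involutive π ∧ invStep π = s ∧ ∀ i, i < π i → M i (π i) := by
  have hstep := (isMotzkinPath_ofFn_iff.mp hs).1
  refine ⟨(partner_involutive hs hM).toPerm, partner_involutive hs hM, funext fun i => ?_,
    fun i hi => ?_⟩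
  · rcases hstep i with h | h | h <;> rw [h]
    · exact invStep_eq_one_iff.mpr (hM.lt (partner_of_up hM h))
    · exact invStep_eq_zero_iff.mpr (partner_of_flat hM h)
    · exact invStep_eq_neg_one_iff.mpr (hM.lt (partner_of_down hs hM h))
  · rcases hstep i with h | h | h
    · exact partner_of_up hM h
    · exact absurd hi (by simp [partner_of_flat hM h])
    · exact absurd hi (hM.lt (partner_of_down hs hM h)).asymm

theorem eq_of_invStep_eq {π σ : Perm (Fin n)} (huniq : ∀ {i j j'}, M i j → M i j' → j = j')
    (hπ : Involutive π) (hσ : Involutive σ) (hπM : ∀ i, i < π i → M i (π i))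
    (hσM : ∀ i, i < σ i → M i (σ i)) (h : invStep π = invStep σ) : π = σ := by
  have hup : ∀ i, i < π i → σ i = π i := fun i hi => by
    have hσi : i < σ i := invStep_eq_one_iff.mp (h ▸ invStep_eq_one_iff.mpr hi)
    exact huniq (hσM i hσi) (hπM i hi)
  refine Equiv.ext fun i => ?_
  rcases lt_trichotomy i (π i) with hi | hi | hi
  · exact (hup i hi).symm
  · rw [← hi, invStep_eq_zero_iff.mp (h ▸ invStep_eq_zero_iff.mpr hi.symm)]
  · have h' : σ (π i) = i := by simpa only [hπ i] using hup (π i) (by rwa [hπ i])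
    calc π i = σ (σ (π i)) := (hσ _).symm
      _ = σ i := by rw [h']

end ArcMatching

section Involutions

variable {π : Perm (Fin n)}

def openArcs (π : Perm (Fin n)) (k : ℕ) : Finset (Fin n) := {x | x.val < k ∧ k ≤ (π x).val}

theorem height_invStep_eq_card_openArcs (hπ : Involutive π) (k : ℕ) :
    height (invStep π) k = #(openArcs π k) := by
  have hdown : #{x : Fin n | x.val < k ∧ invStep π x = -1} = #{x | x < π x ∧ (π x).val < k} := by
    refine card_nbij' π π (fun x hx => ?_) (fun x hx => ?_) (fun x _ => hπ x) (fun x _ => hπ x) <;>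
    simp only [coe_filter, mem_univ, true_and, Set.mem_ofPred_eq, invStep_eq_neg_one_iff,
      hπ x] at hx ⊢ <;>
    exact hx.symm
  have hsplit : #{x : Fin n | x.val < k ∧ invStep π x = 1} =
      #{x | x < π x ∧ (π x).val < k} + #(openArcs π k) := by
    rw [← card_filter_add_card_filter_not (fun x => (π x).val < k), filter_filter, filter_filter]
    congr 2 <;> ext x <;>
    simp only [openArcs, mem_filter, mem_univ, true_and, invStep_eq_one_iff, Fin.lt_def] <;>
    omega
  rw [height_eq_card_sub_card (invStep_cases π), hdown, hsplit]
  push_cast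
  ring

theorem isMotzkinPath_invStep (hπ : Involutive π) : IsMotzkinPath (List.ofFn (invStep π)) := by
  refine isMotzkinPath_ofFn_iff.mpr ⟨invStep_cases π, ?_, fun k => ?_⟩ <;>
  rw [height_invStep_eq_card_openArcs hπ]
  · simp [openArcs]
  · positivity

theorem isConnectedPerm_iff (hπ : Involutive π) :
    IsConnectedPerm π ↔ IsIrreduciblePath (List.ofFn (invStep π)) := by
  have hopen (k : ℕ) :
      ((List.ofFn (invStep π)).take k).sum ≠ 0 ↔ ¬ ∀ i : Fin n, i.val < k → (π i).val < k := by
    rw [← height_eq_sum_take, height_invStep_eq_card_openArcs hπ, Nat.cast_ne_zero,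
      ← pos_iff_ne_zero, card_pos, openArcs, filter_nonempty_iff]
    simp
  simp only [IsConnectedPerm, IsIrreduciblePath, List.length_ofFn, hopen]
  push Not
  rfl

end Involutions

section Bijection

variable {M : (Fin n → ℤ) → Fin n → Fin n → Prop} {P : Perm (Fin n) → Prop}

theorem bijOn_invStep (hM : ∀ s, IsMotzkinPath (List.ofFn s) → IsArcMatching s (M s))
    (hP : ∀ π : Perm (Fin n), Involutive π → (P π ↔ ∀ i, i < π i → M (invStep π) i (π i))) :
    Set.BijOn invStep {π : Perm (Fin n) | Involutive π ∧ P π}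
      {s | IsMotzkinPath (List.ofFn s)} := by
  refine ⟨fun π hπ => isMotzkinPath_invStep hπ.1, fun π hπ σ hσ h => ?_, fun s hs => ?_⟩
  · have hσM := (hP σ hσ.1).mp hσ.2
    rw [← h] at hσM
    exact eq_of_invStep_eq (M := M (invStep π)) (hM _ (isMotzkinPath_invStep hπ.1)).right_unique
      hπ.1 hσ.1 ((hP π hπ.1).mp hπ.2) hσM h
  · obtain ⟨π, hπ, rfl, hπM⟩ := (hM s hs).exists_perm hs
    exact ⟨π, ⟨hπ, (hP π hπ).mpr hπM⟩, rfl⟩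

theorem bijOn_ofFn :
    Set.BijOn List.ofFn {s : Fin n → ℤ | IsMotzkinPath (List.ofFn s)}
      {l | IsMotzkinPath l ∧ l.length = n} := by
  refine ⟨fun s hs => ⟨hs, List.length_ofFn⟩, List.ofFn_injective.injOn, ?_⟩
  rintro l ⟨hl, rfl⟩
  refine ⟨fun i => l[i.val], ?_, List.ofFn_getElem⟩
  rwa [Set.mem_ofPred_eq, List.ofFn_getElem]

theorem card_eq_motzkinNum (hM : ∀ s, IsMotzkinPath (List.ofFn s) → IsArcMatching s (M s))
    (hP : ∀ π : Perm (Fin n), Involutive π → (P π ↔ ∀ i, i < π i → M (invStep π) i (π i))) :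
    Nat.card {π : Perm (Fin n) // Involutive π ∧ P π} = motzkinNum n :=
  Nat.card_congr ((bijOn_ofFn.comp (bijOn_invStep hM hP)).equiv _)

theorem card_connected_eq (hM : ∀ s, IsMotzkinPath (List.ofFn s) → IsArcMatching s (M s))
    (hP : ∀ π : Perm (Fin n), Involutive π → (P π ↔ ∀ i, i < π i → M (invStep π) i (π i))) :
    Nat.card {π : Perm (Fin n) // Involutive π ∧ P π ∧ IsConnectedPerm π} =
      Nat.card {l // IsMotzkinPath l ∧ l.length = n ∧ IsIrreduciblePath l} := by
  have hbij := (bijOn_ofFn.comp (bijOn_invStep hM hP)).inter_mapsTo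
    (s₂ := {π : Perm (Fin n) | Involutive π ∧ IsConnectedPerm π}) (t₂ := {l | IsIrreduciblePath l})
    (fun π hπ => (isConnectedPerm_iff hπ.1).mp hπ.2)
    (fun π hπ => ⟨hπ.1.1, (isConnectedPerm_iff hπ.1.1).mpr hπ.2⟩)
  have hset : {π : Perm (Fin n) | Involutive π ∧ P π} ∩ {π | Involutive π ∧ IsConnectedPerm π} =
      {π : Perm (Fin n) | Involutive π ∧ P π ∧ IsConnectedPerm π} :=
    Set.ext fun π => ⟨fun ⟨⟨h₁, h₂⟩, _, h₃⟩ => ⟨h₁, h₂, h₃⟩, fun ⟨h₁, h₂, h₃⟩ => ⟨⟨h₁, h₂⟩, h₁, h₃⟩⟩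
  rw [hset] at hbij
  exact Nat.card_congr ((hbij.equiv _).trans (Equiv.subtypeEquivRight fun _ => and_assoc))

end Bijection

section FirstReturn

variable {s : Fin n → ℤ}

def FirstReturn (s : Fin n → ℤ) (i j : Fin n) : Prop :=
  i < j ∧ height s (j + 1 : ℕ) = height s i ∧ ∀ k : ℕ, i < k → k ≤ j → height s i < height s k

theorem exists_firstReturn (hs : IsMotzkinPath (List.ofFn s)) {i : Fin n} (hi : s i = 1) :
    ∃ j, FirstReturn s i j := by
  obtain ⟨hstep, hend, hnonneg⟩ := isMotzkinPath_ofFn_iff.mp hs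
  have hsucc := height_succ s i
  have hlast : i.val < n - 1 := by
    by_contra h
    rw [show i.val + 1 = n by omega, hend, hi] at hsucc
    linarith [hnonneg i]
  have hwit : i < n - 1 ∧ height s (n - 1 + 1) ≤ height s i :=
    ⟨hlast, by rw [Nat.sub_add_cancel (by omega), hend]; exact hnonneg i⟩
  have hex : ∃ k : ℕ, i < k ∧ height s (k + 1) ≤ height s i := ⟨_, hwit⟩
  obtain ⟨hik, hdrop⟩ := Nat.find_spec hex
  have hlt : Nat.find hex < n := (Nat.find_min' hex hwit).trans_lt (by omega)
  have habove (k : ℕ) (hik' : i < k) (hk : k ≤ Nat.find hex) : height s i < height s k := by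
    rcases Nat.eq_or_lt_of_le (Nat.succ_le_of_lt hik') with rfl | h
    · rw [hsucc, hi]
      omega
    · have := Nat.find_min hex (show k - 1 < Nat.find hex by omega)
      rw [Nat.sub_add_cancel (by omega)] at this
      push Not at this
      exact this (by omega)
  have hj := height_succ s ⟨Nat.find hex, hlt⟩
  have hlow := habove _ hik le_rfl
  rcases hstep ⟨Nat.find hex, hlt⟩ with h | h | h <;> simp only [h] at hj
  · omega
  · omega
  · exact ⟨⟨Nat.find hex, hlt⟩, hik, by simp only; omega, habove⟩

theorem isArcMatching_firstReturn (hs : IsMotzkinPath (List.ofFn s)) :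
    IsArcMatching s (FirstReturn s) where
  lt h := h.1
  up {i j} h := by
    have := h.2.2 (i + 1) (by omega) (by have := h.1; omega)
    rw [height_succ] at this
    rcases (isMotzkinPath_ofFn_iff.mp hs).1 i with h' | h' | h' <;> rw [h'] at this ⊢ <;> omega
  down {i j} h := by
    have := h.2.2 j h.1 le_rfl
    have hj := height_succ s j
    rw [h.2.1] at hj
    rcases (isMotzkinPath_ofFn_iff.mp hs).1 j with h' | h' | h' <;> rw [h'] at hj ⊢ <;> omega
  right_unique {i j j'} h h' := by
    by_contra hne
    rcases lt_or_gt_of_ne hne with hlt | hlt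
    · exact (h'.2.2 (j + 1) (Nat.lt_succ_of_lt h.1) hlt).ne h.2.1.symm
    · exact (h.2.2 (j' + 1) (Nat.lt_succ_of_lt h'.1) hlt).ne h'.2.1.symm
  left_unique {i i' j} h h' := by
    by_contra hne
    rcases lt_or_gt_of_ne hne with hlt | hlt
    · exact (h.2.2 i' hlt h'.1.le).ne (h.2.1.symm.trans h'.2.1)
    · exact (h'.2.2 i hlt h.1.le).ne (h'.2.1.symm.trans h.2.1)
  exists_right hi := exists_firstReturn hs hi

end FirstReturn

section Noncrossing

variable {π : Perm (Fin n)}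

theorem avoids3412_iff_noncrossing (hπ : Involutive π) :
    Avoids3412 π ↔ ¬ ∃ a b, a < b ∧ b < π a ∧ π a < π b := by
  refine not_congr ⟨fun ⟨a, b, c, d, hab, hbc, hcd, h₁, h₂, h₃⟩ => ?_,
    fun ⟨a, b, hab, hba, h⟩ => ⟨a, b, π a, π b, hab, hba, h, by rwa [hπ, hπ], by rwa [hπ], h⟩⟩
  rcases lt_trichotomy (π d) c with hdc | hdc | hdc
  · exact ⟨π c, π d, h₁, by rwa [hπ], by rwa [hπ, hπ]⟩
  · rw [← hdc, hπ, hdc] at h₁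
    exact absurd (hcd.trans h₁) (lt_irrefl _)
  · exact ⟨a, b, hab, hbc.trans (hdc.trans h₂), h₃⟩

theorem openArcs_subset_of_noncrossing (hπ : Involutive π)
    (hnc : ¬ ∃ a b, a < b ∧ b < π a ∧ π a < π b) {i : Fin n} (hi : i < π i) {k : ℕ}
    (hik : i < k) (hk : k ≤ (π i + 1 : ℕ)) : openArcs π i ⊆ openArcs π k := by
  intro x hx
  simp only [openArcs, mem_filter, mem_univ, true_and] at hx ⊢
  refine ⟨by omega, not_lt.mp fun hxk => hnc ⟨x, i, hx.1, ?_, ?_⟩⟩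
  · have : π x ≠ i := fun h => by rw [hπ.eq_iff] at h; subst h; omega
    exact lt_of_le_of_ne (by omega) this.symm
  · have : π x ≠ π i := fun h => by rw [π.injective h] at hx; omega
    exact lt_of_le_of_ne (by omega) this

theorem openArcs_succ_subset_of_noncrossing (hπ : Involutive π)
    (hnc : ¬ ∃ a b, a < b ∧ b < π a ∧ π a < π b) {i : Fin n} (hi : i < π i) :
    openArcs π (π i + 1 : ℕ) ⊆ openArcs π i := by
  intro x hx
  simp only [openArcs, mem_filter, mem_univ, true_and] at hx ⊢
  suffices x < i by omega
  refine not_le.mp fun hix => hnc ⟨i, x, lt_of_le_of_ne hix ?_, lt_of_le_of_ne (by omega) ?_, hx.2⟩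
  · rintro rfl
    omega
  · rintro rfl
    rw [hπ] at hx
    omega

theorem firstReturn_of_noncrossing (hπ : Involutive π)
    (hnc : ¬ ∃ a b, a < b ∧ b < π a ∧ π a < π b) {i : Fin n} (hi : i < π i) :
    FirstReturn (invStep π) i (π i) := by
  simp only [FirstReturn, height_invStep_eq_card_openArcs hπ, Nat.cast_lt, Nat.cast_inj]
  refine ⟨hi, le_antisymm (card_le_card (openArcs_succ_subset_of_noncrossing hπ hnc hi))
    (card_le_card (openArcs_subset_of_noncrossing hπ hnc hi (by omega) le_rfl)),
    fun k hik hk => card_lt_card ⟨openArcs_subset_of_noncrossing hπ hnc hi hik (by omega),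
      fun h => ?_⟩⟩
  have := h (show i ∈ openArcs π k by simp [openArcs]; omega)
  simp [openArcs] at this

theorem noncrossing_of_forall_firstReturn (h : ∀ i, i < π i → FirstReturn (invStep π) i (π i)) :
    ¬ ∃ a b, a < b ∧ b < π a ∧ π a < π b := by
  rintro ⟨a, b, hab, hba, hpab⟩
  have ha := h a (hab.trans hba)
  have h₁ := ha.2.2 b hab hba.le
  have h₂ := (h b (hba.trans hpab)).2.2 (π a + 1) (by omega) (by omega)
  rw [ha.2.1] at h₂
  exact lt_asymm h₁ h₂

theorem avoids3412_iff_forall_firstReturn (hπ : Involutive π) :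
    Avoids3412 π ↔ ∀ i, i < π i → FirstReturn (invStep π) i (π i) :=
  (avoids3412_iff_noncrossing hπ).trans
    ⟨fun hnc _ hi => firstReturn_of_noncrossing hπ hnc hi, noncrossing_of_forall_firstReturn⟩

end Noncrossing

section RankMatch

variable {s : Fin n → ℤ}

def RankMatch (s : Fin n → ℤ) (i j : Fin n) : Prop :=
  i < j ∧ s i = 1 ∧ s j = -1 ∧ #{x | x < i ∧ s x = 1} = #{y | y < j ∧ s y = -1}

theorem exists_rankMatch (hs : IsMotzkinPath (List.ofFn s)) {i : Fin n} (hi : s i = 1) :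
    ∃ j, RankMatch s i j := by
  obtain ⟨hstep, -, hnonneg⟩ := isMotzkinPath_ofFn_iff.mp hs
  have hr : #{x | x < i ∧ s x = 1} < #{y | s y = -1} :=
    card_up_eq_card_down hs ▸ card_filter_lt_lt_card_filter hi
  obtain ⟨j, hj, hrank⟩ := exists_card_filter_lt_eq hr
  refine ⟨j, ?_, hi, hj, hrank.symm⟩
  rcases lt_trichotomy i j with h | rfl | h
  · exact h
  · simp [hi] at hj
  · have hup : #{x : Fin n | x.val < j + 1 ∧ s x = 1} ≤ #{x | x < i ∧ s x = 1} :=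
      card_le_card fun x hx => by simp only [mem_filter, mem_univ, true_and] at hx ⊢; omega
    have hdown : #{y | y < j ∧ s y = -1} < #{y : Fin n | y.val < j + 1 ∧ s y = -1} :=
      card_lt_card ⟨fun y hy => by simp only [mem_filter, mem_univ, true_and] at hy ⊢; omega,
        fun hsub => by simpa using hsub (mem_filter.mpr ⟨mem_univ j, Nat.lt_succ_self _, hj⟩)⟩
    have := height_eq_card_sub_card hstep (j + 1)
    have := hnonneg (j + 1)
    omega

theorem isArcMatching_rankMatch (hs : IsMotzkinPath (List.ofFn s)) :
    IsArcMatching s (RankMatch s) where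
  lt h := h.1
  up h := h.2.1
  down h := h.2.2.1
  right_unique {i j j'} h h' := by
    have := h.2.2.2
    have := h'.2.2.2
    rcases lt_trichotomy j j' with hlt | heq | hlt
    · have := card_filter_lt_lt_of_lt (p := (s · = -1)) h.2.2.1 hlt
      omega
    · exact heq
    · have := card_filter_lt_lt_of_lt (p := (s · = -1)) h'.2.2.1 hlt
      omega
  left_unique {i i' j} h h' := by
    have := h.2.2.2
    have := h'.2.2.2
    rcases lt_trichotomy i i' with hlt | heq | hlt
    · have := card_filter_lt_lt_of_lt (p := (s · = 1)) h.2.1 hlt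
      omega
    · exact heq
    · have := card_filter_lt_lt_of_lt (p := (s · = 1)) h'.2.1 hlt
      omega
  exists_right hi := exists_rankMatch hs hi

end RankMatch

section Nonnesting

variable {π : Perm (Fin n)}

theorem avoids4321_iff_nonnesting (hπ : Involutive π) :
    Avoids4321 π ↔ ¬ ∃ a b, a < b ∧ b < π b ∧ π b < π a := by
  refine not_congr ⟨fun ⟨a, b, c, d, hab, hbc, hcd, h₁, h₂, h₃⟩ => ?_,
    fun ⟨a, b, hab, hbb, hba⟩ => ⟨a, b, π b, π a, hab, hbb, hba, by rwa [hπ, hπ], by rwa [hπ], hba⟩⟩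
  rcases lt_or_ge b (π b) with hb | hb
  · exact ⟨a, b, hab, hb, h₃⟩
  · exact ⟨π d, π c, h₁, by rw [hπ]; exact h₂.trans_le (hb.trans hbc.le), by rwa [hπ, hπ]⟩

theorem rankMatch_of_nonnesting (hπ : Involutive π) (hnn : ¬ ∃ a b, a < b ∧ b < π b ∧ π b < π a)
    {i : Fin n} (hi : i < π i) : RankMatch (invStep π) i (π i) := by
  refine ⟨hi, invStep_eq_one_iff.mpr hi, invStep_eq_neg_one_iff.mpr (by rwa [hπ]), ?_⟩
  simp only [invStep_eq_one_iff, invStep_eq_neg_one_iff]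
  refine card_nbij' π π (fun x hx => ?_) (fun y hy => ?_) (fun x _ => hπ x) (fun y _ => hπ y)
  · simp only [coe_filter, mem_univ, true_and, Set.mem_ofPred_eq, hπ x] at hx ⊢
    refine ⟨not_le.mp fun hix => hnn ⟨x, i, hx.1, hi, lt_of_le_of_ne hix ?_⟩, hx.2⟩
    exact fun h => hx.1.ne (π.injective h).symm
  · simp only [coe_filter, mem_univ, true_and, Set.mem_ofPred_eq, hπ y] at hy ⊢
    refine ⟨not_le.mp fun hiy => hnn ⟨i, π y, lt_of_le_of_ne hiy ?_, by rw [hπ]; exact hy.2,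
      by rw [hπ]; exact hy.1⟩,
      hy.2⟩
    rintro h
    rw [eq_comm, hπ.eq_iff] at h
    exact hy.1.ne h

theorem nonnesting_of_forall_rankMatch (h : ∀ i, i < π i → RankMatch (invStep π) i (π i)) :
    ¬ ∃ a b, a < b ∧ b < π b ∧ π b < π a := by
  rintro ⟨a, b, hab, hbb, hba⟩
  have ha := h a (hab.trans (hbb.trans hba))
  have hb := h b hbb
  have := card_filter_lt_lt_of_lt (p := (invStep π · = 1)) ha.2.1 hab
  have := card_filter_lt_lt_of_lt (p := (invStep π · = -1)) hb.2.2.1 hba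
  have := ha.2.2.2
  have := hb.2.2.2
  omega

theorem avoids4321_iff_forall_rankMatch (hπ : Involutive π) :
    Avoids4321 π ↔ ∀ i, i < π i → RankMatch (invStep π) i (π i) :=
  (avoids4321_iff_nonnesting hπ).trans
    ⟨fun hnn _ hi => rankMatch_of_nonnesting hπ hnn hi, nonnesting_of_forall_rankMatch⟩

end Nonnesting

theorem count3412_eq_motzkinNum (n : ℕ) : count3412 n = motzkinNum n :=
  card_eq_motzkinNum (fun _ => isArcMatching_firstReturn) fun _ => avoids3412_iff_forall_firstReturn

theorem count4321_eq_motzkinNum (n : ℕ) : count4321 n = motzkinNum n :=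
  card_eq_motzkinNum (fun _ => isArcMatching_rankMatch) fun _ => avoids4321_iff_forall_rankMatch

theorem connCount3412_eq_motzkinNum (n : ℕ) : connCount3412 (n + 2) = motzkinNum n :=
  (card_connected_eq (fun _ => isArcMatching_firstReturn)
    fun _ => avoids3412_iff_forall_firstReturn).trans (card_irreducible_eq_motzkinNum n)

theorem connCount4321_eq_motzkinNum (n : ℕ) : connCount4321 (n + 2) = motzkinNum n :=
  (card_connected_eq (fun _ => isArcMatching_rankMatch)
    fun _ => avoids4321_iff_forall_rankMatch).trans (card_irreducible_eq_motzkinNum n)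

end MotzkinInvolution

/-- 3412-avoiding and 4321-avoiding involutions of length `n` are equinumerous and
counted by the Motzkin number `M_n`; moreover the connected (irreducible)
involutions of length `n + 2` in either class are also equinumerous, counted by
`M_n` (this is the statement that the generating function of the irreducible
involutions in either class is `(f(x)+1)x²`). -/
theorem stmt19 :
    (∀ n : ℕ, count3412 n = count4321 n) ∧
    (∀ n : ℕ, count4321 n = motzkinNum n) ∧
    (∀ n : ℕ, connCount3412 (n + 2) = motzkinNum n) ∧
    (∀ n : ℕ, connCount4321 (n + 2) = motzkinNum n) := by
  open MotzkinInvolution in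
  exact ⟨fun n => (count3412_eq_motzkinNum n).trans (count4321_eq_motzkinNum n).symm,
    count4321_eq_motzkinNum, connCount3412_eq_motzkinNum, connCount4321_eq_motzkinNum⟩
end
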